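/- arXiv:2410.02342 — 5 statements merged into one kernel-verified Lean document; each statement's English description precedes it below -/
import Mathlib

section
/- Under the hypotheses of the DMC output partitioning lemma, for any fixed set B₁ of the partition, I(X;Y) ≥ P(B₁) · I₁, where I₁ is the mutual information of the channel restricted to outputs in B₁ under the same input distribution. -/
open Finset

lemma convexOn_mul_logb : ConvexOn ℝ (Set.Ici (0 : ℝ)) (fun x ↦ x * Real.logb 2 x) := by
  have h : (fun x : ℝ ↦ x * Real.logb 2 x)
      = fun x ↦ (Real.log 2)⁻¹ • (x * Real.log x) := by
    funext x
    simp [Real.logb, div_eq_inv_mul, smul_eq_mul]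
    ring
  rw [h]
  exact Real.convexOn_mul_log.smul (by positivity)

lemma mul_div_logb (c : ℝ) (hc : 0 < c) (x : ℝ) (hx : 0 ≤ x) :
    c * (x / c * Real.logb 2 (x / c)) = x * Real.logb 2 x - x * Real.logb 2 c := by
  rcases eq_or_lt_of_le hx with h | h
  · simp [← h]
  · rw [Real.logb_div (ne_of_gt h) (ne_of_gt hc)]
    field_simp

/-- Under the hypotheses of the DMC output-partitioning lemma, for a fixed
set `B₁` of the partition (a subset of outputs whose occurrence event is independent of
the input), `I(X;Y) ≥ P(B₁) · I₁`, where `I₁` is the mutual information of the channel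
restricted (conditioned) to outputs in `B₁` under the same input distribution `P`. -/
theorem stmt_2 {α β : Type*} [Fintype α] [Fintype β] [DecidableEq β]
    (P : α → ℝ) (hP0 : ∀ a, 0 ≤ P a) (hP1 : ∑ a, P a = 1)
    (W : α → β → ℝ) (hW0 : ∀ a b, 0 ≤ W a b) (hW1 : ∀ a, ∑ b, W a b = 1)
    (B₁ : Finset β) (hne : B₁.Nonempty)
    (hpos : ∀ b, 0 < ∑ a, P a * W a b)
    (PB₁ : ℝ) (hPB : PB₁ = ∑ b ∈ B₁, ∑ a, P a * W a b)
    (hindep : ∀ a, ∑ b ∈ B₁, W a b = PB₁) :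
    let q : β → ℝ := fun b => ∑ a, P a * W a b
    let IXY : ℝ := (-∑ b, q b * Real.logb 2 (q b))
      + ∑ a, P a * ∑ b, W a b * Real.logb 2 (W a b)
    let I₁ : ℝ := (-∑ b ∈ B₁, (q b / PB₁) * Real.logb 2 (q b / PB₁))
      + ∑ a, P a * ∑ b ∈ B₁, (W a b / PB₁) * Real.logb 2 (W a b / PB₁)
    PB₁ * I₁ ≤ IXY := by
  intro q IXY I₁
  have hPBpos : 0 < PB₁ := by
    rw [hPB]; exact Finset.sum_pos (fun b _ => hpos b) hne
  set L := Real.logb 2 with hL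
  -- sum of q over B₁ is PB₁
  have hsumq : ∑ b ∈ B₁, q b = PB₁ := hPB.symm
  -- rewrite PB₁ * I₁
  have hqdiv : ∀ b, PB₁ * (q b / PB₁ * L (q b / PB₁)) = q b * L (q b) - q b * L PB₁ :=
    fun b => mul_div_logb PB₁ hPBpos (q b) (le_of_lt (hpos b))
  have hWdiv : ∀ a b, PB₁ * (W a b / PB₁ * L (W a b / PB₁))
      = W a b * L (W a b) - W a b * L PB₁ :=
    fun a b => mul_div_logb PB₁ hPBpos (W a b) (hW0 a b)
  have hPBI : PB₁ * I₁ = (-∑ b ∈ B₁, q b * L (q b))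
      + ∑ a, P a * ∑ b ∈ B₁, W a b * L (W a b) := by
    have h1 : PB₁ * (-∑ b ∈ B₁, (q b / PB₁) * L (q b / PB₁))
        = -∑ b ∈ B₁, q b * L (q b) + PB₁ * L PB₁ := by
      rw [mul_neg, Finset.mul_sum]
      simp only [hqdiv]
      rw [Finset.sum_sub_distrib, ← Finset.sum_mul, hsumq]
      ring
    have h2 : PB₁ * (∑ a, P a * ∑ b ∈ B₁, (W a b / PB₁) * L (W a b / PB₁))
        = (∑ a, P a * ∑ b ∈ B₁, W a b * L (W a b)) - PB₁ * L PB₁ := by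
      rw [Finset.mul_sum]
      have : ∀ a, PB₁ * (P a * ∑ b ∈ B₁, (W a b / PB₁) * L (W a b / PB₁))
          = P a * ∑ b ∈ B₁, W a b * L (W a b) - P a * (PB₁ * L PB₁) := by
        intro a
        have : PB₁ * ∑ b ∈ B₁, (W a b / PB₁) * L (W a b / PB₁)
            = ∑ b ∈ B₁, W a b * L (W a b) - PB₁ * L PB₁ := by
          rw [Finset.mul_sum]
          simp only [hWdiv]
          rw [Finset.sum_sub_distrib, ← Finset.sum_mul, hindep a]
        calc PB₁ * (P a * ∑ b ∈ B₁, (W a b / PB₁) * L (W a b / PB₁))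
            = P a * (PB₁ * ∑ b ∈ B₁, (W a b / PB₁) * L (W a b / PB₁)) := by ring
          _ = P a * (∑ b ∈ B₁, W a b * L (W a b) - PB₁ * L PB₁) := by rw [this]
          _ = P a * ∑ b ∈ B₁, W a b * L (W a b) - P a * (PB₁ * L PB₁) := by ring
      simp only [this]
      rw [Finset.sum_sub_distrib, ← Finset.sum_mul, hP1, one_mul]
    show PB₁ * (_ + _) = _
    rw [mul_add, h1, h2]
    ring
  -- split IXY over B₁ and its complement
  have hsplitq : ∑ b, q b * L (q b)
      = ∑ b ∈ B₁, q b * L (q b) + ∑ b ∈ B₁ᶜ, q b * L (q b) :=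
    (Finset.sum_add_sum_compl B₁ _).symm
  have hsplitW : ∀ a, ∑ b, W a b * L (W a b)
      = ∑ b ∈ B₁, W a b * L (W a b) + ∑ b ∈ B₁ᶜ, W a b * L (W a b) :=
    fun a => (Finset.sum_add_sum_compl B₁ _).symm
  have hIXY : IXY = (-∑ b ∈ B₁, q b * L (q b)) + ∑ a, P a * ∑ b ∈ B₁, W a b * L (W a b)
      + ((-∑ b ∈ B₁ᶜ, q b * L (q b)) + ∑ a, P a * ∑ b ∈ B₁ᶜ, W a b * L (W a b)) := by
    show (-∑ b, q b * L (q b)) + ∑ a, P a * ∑ b, W a b * L (W a b) = _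
    rw [hsplitq]
    have : ∑ a, P a * ∑ b, W a b * L (W a b)
        = ∑ a, P a * ∑ b ∈ B₁, W a b * L (W a b)
          + ∑ a, P a * ∑ b ∈ B₁ᶜ, W a b * L (W a b) := by
      rw [← Finset.sum_add_distrib]
      refine Finset.sum_congr rfl fun a _ => ?_
      rw [hsplitW a]; ring
    rw [this]; ring
  rw [hPBI, hIXY]
  have hkey : 0 ≤ (-∑ b ∈ B₁ᶜ, q b * L (q b))
      + ∑ a, P a * ∑ b ∈ B₁ᶜ, W a b * L (W a b) := by
    have hswap : ∑ a, P a * ∑ b ∈ B₁ᶜ, W a b * L (W a b)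
        = ∑ b ∈ B₁ᶜ, ∑ a, P a * (W a b * L (W a b)) := by
      simp only [Finset.mul_sum]
      exact Finset.sum_comm
    rw [hswap, neg_add_eq_sub, sub_nonneg]
    refine Finset.sum_le_sum fun b _ => ?_
    have hj := convexOn_mul_logb.map_sum_le (t := Finset.univ) (w := P)
      (p := fun a => W a b) (fun a _ => hP0 a) hP1 (fun a _ => hW0 a b)
    simpa [smul_eq_mul, q, hL] using hj
  linarith
end

section
/- Under the hypotheses of the DMC output partitioning lemma, if the input alphabet has size 2^L, then I(X;Y) ≤ P(B₁) · I₁ + (1 − P(B₁)) · L, where I₁ is the mutual information of the channel restricted to outputs in B₁ under the same input distribution. -/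
open Finset


lemma scale_id {c x : ℝ} (hc : 0 < c) (hx : 0 ≤ x) :
    x * Real.logb 2 x = c * ((x / c) * Real.logb 2 (x / c)) + x * Real.logb 2 c := by
  rcases eq_or_lt_of_le hx with h | h
  · simp [← h]
  · have hx0 : x ≠ 0 := ne_of_gt h
    have hc0 : c ≠ 0 := ne_of_gt hc
    rw [Real.logb_div hx0 hc0]
    field_simp
    ring

lemma entropy_le_log_card {α : Type*} [Fintype α] (P : α → ℝ) (hP0 : ∀ a, 0 ≤ P a)
    (hP1 : ∑ a, P a = 1) :
    -∑ a, P a * Real.logb 2 (P a) ≤ Real.logb 2 (Fintype.card α) := by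
  have hne : Nonempty α := by
    by_contra h
    rw [not_nonempty_iff] at h
    rw [Finset.univ_eq_empty, Finset.sum_empty] at hP1
    norm_num at hP1
  have hn : (0:ℝ) < (Fintype.card α : ℝ) := by
    exact_mod_cast Fintype.card_pos
  set n : ℝ := (Fintype.card α : ℝ) with hn'
  have hlog2 : (0:ℝ) < Real.log 2 := Real.log_pos (by norm_num)
  have key : ∀ a, (P a - 1/n) / Real.log 2 ≤ P a * Real.logb 2 (n * P a) := by
    intro a
    rcases eq_or_lt_of_le (hP0 a) with h | h
    · rw [← h]
      simp only [mul_zero, zero_mul]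
      apply div_nonpos_of_nonpos_of_nonneg _ hlog2.le
      simp only [zero_sub, neg_nonpos]
      positivity
    · have hnp : 0 < n * P a := by positivity
      have h1 : Real.log ((n * P a)⁻¹) ≤ (n * P a)⁻¹ - 1 :=
        Real.log_le_sub_one_of_pos (by positivity)
      rw [Real.log_inv] at h1
      have h2 : 1 - (n * P a)⁻¹ ≤ Real.log (n * P a) := by linarith
      have h3 : P a - 1/n ≤ P a * Real.log (n * P a) := by
        have := mul_le_mul_of_nonneg_left h2 (hP0 a)
        have heq : P a * (1 - (n * P a)⁻¹) = P a - 1/n := by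
          field_simp
        linarith [heq ▸ this]
      rw [← Real.log_div_log, mul_div_assoc']
      exact (div_le_div_iff_of_pos_right hlog2).mpr h3
  have hsum : (0:ℝ) ≤ ∑ a, P a * Real.logb 2 (n * P a) := by
    have h1 : ∑ a, (P a - 1/n) / Real.log 2 ≤ ∑ a, P a * Real.logb 2 (n * P a) :=
      Finset.sum_le_sum fun a _ => key a
    have h2 : ∑ a, (P a - 1/n) / Real.log 2 = 0 := by
      rw [← Finset.sum_div, Finset.sum_sub_distrib, hP1]
      rw [Finset.sum_const, nsmul_eq_mul]
      rw [div_eq_zero_iff]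
      left
      field_simp
      simp [Finset.card_univ, hn']
    linarith
  have hexp : ∀ a, P a * Real.logb 2 (n * P a) = P a * Real.logb 2 n + P a * Real.logb 2 (P a) := by
    intro a
    rcases eq_or_lt_of_le (hP0 a) with h | h
    · simp [← h]
    · rw [Real.logb_mul (ne_of_gt hn) (ne_of_gt h)]
      ring
  have : ∑ a, P a * Real.logb 2 (n * P a)
      = Real.logb 2 n + ∑ a, P a * Real.logb 2 (P a) := by
    rw [Finset.sum_congr rfl fun a _ => hexp a, Finset.sum_add_distrib,
      ← Finset.sum_mul, hP1, one_mul]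
  linarith [this ▸ hsum]

lemma decomp {α β : Type*} [Fintype α] [Fintype β] (P : α → ℝ) (hP0 : ∀ a, 0 ≤ P a)
    (hP1 : ∑ a, P a = 1) (W : α → β → ℝ) (hW0 : ∀ a b, 0 ≤ W a b)
    (S : Finset β) (c : ℝ) (hc : 0 < c) (hsum : ∀ a, ∑ b ∈ S, W a b = c) :
    (-∑ b ∈ S, (∑ a, P a * W a b) * Real.logb 2 (∑ a, P a * W a b))
      + ∑ a, P a * ∑ b ∈ S, W a b * Real.logb 2 (W a b)
    = c * ((-∑ b ∈ S, ((∑ a, P a * W a b) / c) * Real.logb 2 ((∑ a, P a * W a b) / c))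
      + ∑ a, P a * ∑ b ∈ S, (W a b / c) * Real.logb 2 (W a b / c)) := by
  have hq0 : ∀ b, 0 ≤ ∑ a, P a * W a b := fun b =>
    Finset.sum_nonneg fun a _ => mul_nonneg (hP0 a) (hW0 a b)
  have hqS : ∑ b ∈ S, (∑ a, P a * W a b) = c := by
    rw [Finset.sum_comm]
    calc ∑ a, ∑ b ∈ S, P a * W a b = ∑ a, P a * ∑ b ∈ S, W a b := by
          simp [Finset.mul_sum]
      _ = ∑ a, P a * c := by simp [hsum]
      _ = c := by rw [← Finset.sum_mul, hP1, one_mul]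
  have e1 : ∑ b ∈ S, (∑ a, P a * W a b) * Real.logb 2 (∑ a, P a * W a b)
      = c * ∑ b ∈ S, ((∑ a, P a * W a b) / c) * Real.logb 2 ((∑ a, P a * W a b) / c)
        + c * Real.logb 2 c := by
    rw [Finset.sum_congr rfl fun b _ => scale_id hc (hq0 b), Finset.sum_add_distrib,
      Finset.mul_sum, ← Finset.sum_mul, hqS]
  have e2 : ∀ a, ∑ b ∈ S, W a b * Real.logb 2 (W a b)
      = c * ∑ b ∈ S, (W a b / c) * Real.logb 2 (W a b / c) + c * Real.logb 2 c := by
    intro a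
    rw [Finset.sum_congr rfl fun b _ => scale_id hc (hW0 a b), Finset.sum_add_distrib,
      Finset.mul_sum, ← Finset.sum_mul, hsum]
  have e3 : ∑ a, P a * ∑ b ∈ S, W a b * Real.logb 2 (W a b)
      = c * ∑ a, P a * ∑ b ∈ S, (W a b / c) * Real.logb 2 (W a b / c)
        + c * Real.logb 2 c := by
    calc ∑ a, P a * ∑ b ∈ S, W a b * Real.logb 2 (W a b)
        = ∑ a, (c * (P a * ∑ b ∈ S, (W a b / c) * Real.logb 2 (W a b / c))
            + P a * (c * Real.logb 2 c)) := by
          refine Finset.sum_congr rfl fun a _ => ?_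
          rw [e2 a]; ring
      _ = c * ∑ a, P a * ∑ b ∈ S, (W a b / c) * Real.logb 2 (W a b / c)
            + c * Real.logb 2 c := by
          rw [Finset.sum_add_distrib, ← Finset.mul_sum, ← Finset.sum_mul, hP1]
          ring
  rw [e1, e3]
  ring

lemma mi_le_log_card {α β : Type*} [Fintype α] [Fintype β] (P : α → ℝ)
    (hP0 : ∀ a, 0 ≤ P a) (hP1 : ∑ a, P a = 1)
    (V : α → β → ℝ) (hV0 : ∀ a b, 0 ≤ V a b) (S : Finset β)
    (hV1 : ∀ a, ∑ b ∈ S, V a b = 1)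
    (hr : ∀ b ∈ S, 0 < ∑ a, P a * V a b) :
    (-∑ b ∈ S, (∑ a, P a * V a b) * Real.logb 2 (∑ a, P a * V a b))
      + ∑ a, P a * ∑ b ∈ S, V a b * Real.logb 2 (V a b)
      ≤ Real.logb 2 (Fintype.card α) := by
  have e1 : ∑ b ∈ S, (∑ a, P a * V a b) * Real.logb 2 (∑ a, P a * V a b)
      = ∑ a, ∑ b ∈ S, P a * V a b * Real.logb 2 (∑ a', P a' * V a' b) := by
    rw [Finset.sum_comm]
    exact Finset.sum_congr rfl fun b _ => by rw [Finset.sum_mul]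
  have e2 : ∑ a, P a * ∑ b ∈ S, V a b * Real.logb 2 (V a b)
      = ∑ a, ∑ b ∈ S, P a * V a b * Real.logb 2 (V a b) := by
    refine Finset.sum_congr rfl fun a _ => ?_
    rw [Finset.mul_sum]
    exact Finset.sum_congr rfl fun b _ => by ring
  rw [e1, e2]
  have key : ∀ a, ∑ b ∈ S, P a * V a b * Real.logb 2 (V a b)
      - ∑ b ∈ S, P a * V a b * Real.logb 2 (∑ a', P a' * V a' b)
      ≤ -(P a * Real.logb 2 (P a)) := by
    intro a
    rw [← Finset.sum_sub_distrib]
    have hterm : ∀ b ∈ S, P a * V a b * Real.logb 2 (V a b)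
        - P a * V a b * Real.logb 2 (∑ a', P a' * V a' b)
        ≤ -(P a * V a b * Real.logb 2 (P a)) := by
      intro b hb
      rcases eq_or_lt_of_le (hP0 a) with hpa | hpa
      · simp [← hpa]
      rcases eq_or_lt_of_le (hV0 a b) with hv | hv
      · simp [← hv]
      have hrb := hr b hb
      have hle : P a * V a b ≤ ∑ a', P a' * V a' b :=
        Finset.single_le_sum (f := fun a' => P a' * V a' b)
          (fun a' _ => mul_nonneg (hP0 a') (hV0 a' b)) (Finset.mem_univ a)
      have hcomb : Real.logb 2 (V a b) - Real.logb 2 (∑ a', P a' * V a' b)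
          + Real.logb 2 (P a)
          = Real.logb 2 (P a * V a b / (∑ a', P a' * V a' b)) := by
        rw [Real.logb_div (by positivity) (ne_of_gt hrb), Real.logb_mul
          (ne_of_gt hpa) (ne_of_gt hv)]
        ring
      have hnp : Real.logb 2 (P a * V a b / (∑ a', P a' * V a' b)) ≤ 0 :=
        Real.logb_nonpos (by norm_num) (by positivity)
          ((div_le_one hrb).mpr hle)
      nlinarith [mul_pos hpa hv]
    calc ∑ b ∈ S, (P a * V a b * Real.logb 2 (V a b)
          - P a * V a b * Real.logb 2 (∑ a', P a' * V a' b))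
        ≤ ∑ b ∈ S, -(P a * V a b * Real.logb 2 (P a)) := Finset.sum_le_sum hterm
      _ = -(P a * Real.logb 2 (P a)) := by
          simp only [Finset.sum_neg_distrib]
          congr 1
          calc ∑ b ∈ S, P a * V a b * Real.logb 2 (P a)
              = (∑ b ∈ S, V a b) * (P a * Real.logb 2 (P a)) := by
                rw [Finset.sum_mul]
                exact Finset.sum_congr rfl fun b _ => by ring
            _ = P a * Real.logb 2 (P a) := by rw [hV1 a, one_mul]
  calc -∑ a, ∑ b ∈ S, P a * V a b * Real.logb 2 (∑ a', P a' * V a' b)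
        + ∑ a, ∑ b ∈ S, P a * V a b * Real.logb 2 (V a b)
      = ∑ a, (∑ b ∈ S, P a * V a b * Real.logb 2 (V a b)
          - ∑ b ∈ S, P a * V a b * Real.logb 2 (∑ a', P a' * V a' b)) := by
        rw [Finset.sum_sub_distrib]; ring
    _ ≤ ∑ a, -(P a * Real.logb 2 (P a)) := Finset.sum_le_sum fun a _ => key a
    _ = -∑ a, P a * Real.logb 2 (P a) := by rw [Finset.sum_neg_distrib]
    _ ≤ Real.logb 2 (Fintype.card α) := entropy_le_log_card P hP0 hP1


/-- Under the hypotheses of the DMC output-partitioning lemma, if the input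
alphabet has size `2^L`, then `I(X;Y) ≤ P(B₁) · I₁ + (1 − P(B₁)) · L`, where `I₁` is the
mutual information of the channel restricted (conditioned) to outputs in `B₁` under the
same input distribution `P`. -/
theorem stmt_3 {α β : Type*} [Fintype α] [Fintype β] [DecidableEq β] (L : ℕ)
    (hcard : Fintype.card α = 2 ^ L)
    (P : α → ℝ) (hP0 : ∀ a, 0 ≤ P a) (hP1 : ∑ a, P a = 1)
    (W : α → β → ℝ) (hW0 : ∀ a b, 0 ≤ W a b) (hW1 : ∀ a, ∑ b, W a b = 1)
    (B₁ : Finset β) (hne : B₁.Nonempty)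
    (hpos : ∀ b, 0 < ∑ a, P a * W a b)
    (PB₁ : ℝ) (hPB : PB₁ = ∑ b ∈ B₁, ∑ a, P a * W a b)
    (hindep : ∀ a, ∑ b ∈ B₁, W a b = PB₁) :
    let q : β → ℝ := fun b => ∑ a, P a * W a b
    let IXY : ℝ := (-∑ b, q b * Real.logb 2 (q b))
      + ∑ a, P a * ∑ b, W a b * Real.logb 2 (W a b)
    let I₁ : ℝ := (-∑ b ∈ B₁, (q b / PB₁) * Real.logb 2 (q b / PB₁))
      + ∑ a, P a * ∑ b ∈ B₁, (W a b / PB₁) * Real.logb 2 (W a b / PB₁)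
    IXY ≤ PB₁ * I₁ + (1 - PB₁) * L := by
  intro q IXY I₁
  have hPB1pos : 0 < PB₁ := by
    rw [hPB]; exact Finset.sum_pos (fun b _ => hpos b) hne
  set B₂ : Finset β := Finset.univ \ B₁ with hB₂
  have hsplit : ∀ f : β → ℝ, ∑ b, f b = ∑ b ∈ B₂, f b + ∑ b ∈ B₁, f b :=
    fun f => (Finset.sum_sdiff (Finset.subset_univ B₁)).symm
  have hindep2 : ∀ a, ∑ b ∈ B₂, W a b = 1 - PB₁ := by
    intro a
    have := hsplit (W a)
    rw [hW1 a, hindep a] at this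
    linarith
  have hqB2 : ∑ b ∈ B₂, q b = 1 - PB₁ := by
    rw [Finset.sum_comm]
    calc ∑ a, ∑ b ∈ B₂, P a * W a b = ∑ a, P a * ∑ b ∈ B₂, W a b := by
          simp [Finset.mul_sum]
      _ = ∑ a, P a * (1 - PB₁) := by simp only [hindep2]
      _ = 1 - PB₁ := by rw [← Finset.sum_mul, hP1, one_mul]
  have hPB1le : 1 - PB₁ ≥ 0 := by
    have := hqB2
    have h0 : 0 ≤ ∑ b ∈ B₂, q b :=
      Finset.sum_nonneg fun b _ => (hpos b).le
    linarith
  -- split IXY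
  have hIXY : IXY = ((-∑ b ∈ B₂, q b * Real.logb 2 (q b))
      + ∑ a, P a * ∑ b ∈ B₂, W a b * Real.logb 2 (W a b))
      + ((-∑ b ∈ B₁, q b * Real.logb 2 (q b))
      + ∑ a, P a * ∑ b ∈ B₁, W a b * Real.logb 2 (W a b)) := by
    show (-∑ b, q b * Real.logb 2 (q b))
      + ∑ a, P a * ∑ b, W a b * Real.logb 2 (W a b) = _
    rw [hsplit (fun b => q b * Real.logb 2 (q b))]
    have : ∑ a, P a * ∑ b, W a b * Real.logb 2 (W a b)
        = ∑ a, P a * ∑ b ∈ B₂, W a b * Real.logb 2 (W a b)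
          + ∑ a, P a * ∑ b ∈ B₁, W a b * Real.logb 2 (W a b) := by
      rw [← Finset.sum_add_distrib]
      refine Finset.sum_congr rfl fun a _ => ?_
      rw [← mul_add, ← hsplit]
    rw [this]; ring
  have hF1 : (-∑ b ∈ B₁, q b * Real.logb 2 (q b))
      + ∑ a, P a * ∑ b ∈ B₁, W a b * Real.logb 2 (W a b) = PB₁ * I₁ :=
    decomp P hP0 hP1 W hW0 B₁ PB₁ hPB1pos hindep
  have hF2 : (-∑ b ∈ B₂, q b * Real.logb 2 (q b))
      + ∑ a, P a * ∑ b ∈ B₂, W a b * Real.logb 2 (W a b) ≤ (1 - PB₁) * L := by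
    rcases eq_or_lt_of_le hPB1le with h0 | h0
    · -- 1 - PB₁ = 0 : B₂ is empty
      have hB2e : B₂ = ∅ := by
        by_contra hB2ne
        have : 0 < ∑ b ∈ B₂, q b :=
          Finset.sum_pos (fun b _ => hpos b) (Finset.nonempty_of_ne_empty hB2ne)
        rw [hqB2] at this
        linarith
      rw [hB2e]
      simp [← h0]
    · have hc : 0 < 1 - PB₁ := h0
      set c := 1 - PB₁ with hc'
      have e := decomp P hP0 hP1 W hW0 B₂ c hc hindep2
      rw [e]
      have hL : Real.logb 2 (Fintype.card α) = (L : ℝ) := by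
        rw [hcard]
        push_cast
        rw [Real.logb_pow, Real.logb_self_eq_one (by norm_num)]
        ring
      have hmi : (-∑ b ∈ B₂, ((∑ a, P a * W a b) / c) * Real.logb 2 ((∑ a, P a * W a b) / c))
          + ∑ a, P a * ∑ b ∈ B₂, (W a b / c) * Real.logb 2 (W a b / c) ≤ (L : ℝ) := by
        rw [← hL]
        have hV1 : ∀ a, ∑ b ∈ B₂, W a b / c = 1 := by
          intro a
          rw [← Finset.sum_div, hindep2 a, div_self (ne_of_gt hc)]
        have hconv : ∀ b, ∑ a, P a * (W a b / c) = (∑ a, P a * W a b) / c := by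
          intro b
          rw [Finset.sum_div]
          exact Finset.sum_congr rfl fun a _ => (mul_div_assoc _ _ _).symm
        have := mi_le_log_card P hP0 hP1 (fun a b => W a b / c)
          (fun a b => div_nonneg (hW0 a b) hc.le) B₂ hV1
          (fun b hb => by rw [hconv b]; exact div_pos (hpos b) hc)
        simpa only [hconv] using this
      calc c * ((-∑ b ∈ B₂, ((∑ a, P a * W a b) / c) * Real.logb 2 ((∑ a, P a * W a b) / c))
            + ∑ a, P a * ∑ b ∈ B₂, (W a b / c) * Real.logb 2 (W a b / c))
          ≤ c * (L : ℝ) := mul_le_mul_of_nonneg_left hmi hc.le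
        _ = (1 - PB₁) * L := by rw [hc']
  linarith [hIXY, hF1, hF2]
end

section
/- Let X, Y, S be discrete random variables with S independent of X and S taking values in {0,1}. Then I(X;Y) ≥ P(S=1) · I(X;Y|S=1) − H(S). -/
/-- Shannon entropy (in bits) of a finitely supported mass function. -/
noncomputable def ent {ι : Type*} [Fintype ι] (q : ι → ℝ) : ℝ :=
  -∑ i, q i * Real.logb 2 (q i)

lemma gibbs_aux (P Q : ℝ) (hP : 0 ≤ P) (hQ : 0 ≤ Q) (hac : Q = 0 → P = 0) :
    P * (Real.logb 2 Q - Real.logb 2 P) ≤ (Q - P) / Real.log 2 := by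
  have hlog2 : (0:ℝ) < Real.log 2 := Real.log_pos (by norm_num)
  rcases eq_or_lt_of_le hP with h0 | hPpos
  · rw [← h0]
    simp only [zero_mul, sub_zero]
    positivity
  · have hQpos : 0 < Q := lt_of_le_of_ne hQ fun h => absurd (hac h.symm) hPpos.ne'
    have hle := Real.log_le_sub_one_of_pos (div_pos hQpos hPpos)
    rw [Real.log_div hQpos.ne' hPpos.ne'] at hle
    have h1 : P * (Real.log Q - Real.log P) ≤ P * (Q / P - 1) :=
      mul_le_mul_of_nonneg_left hle hPpos.le
    have h2 : P * (Q / P - 1) = Q - P := by field_simp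
    rw [Real.logb, Real.logb]
    calc P * (Real.log Q / Real.log 2 - Real.log P / Real.log 2)
        = P * (Real.log Q - Real.log P) / Real.log 2 := by ring
      _ ≤ (Q - P) / Real.log 2 := by rw [← h2]; gcongr

/-- Gibbs' inequality. -/
lemma gibbs {ι : Type*} [Fintype ι] (P Q : ι → ℝ) (hP : ∀ i, 0 ≤ P i) (hQ : ∀ i, 0 ≤ Q i)
    (hsum : ∑ i, Q i ≤ ∑ i, P i) (hac : ∀ i, Q i = 0 → P i = 0) :
    ∑ i, P i * Real.logb 2 (Q i) ≤ ∑ i, P i * Real.logb 2 (P i) := by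
  have hlog2 : (0:ℝ) < Real.log 2 := Real.log_pos (by norm_num)
  have h1 : ∑ i, P i * (Real.logb 2 (Q i) - Real.logb 2 (P i)) ≤ ∑ i, (Q i - P i) / Real.log 2 :=
    Finset.sum_le_sum fun i _ => gibbs_aux (P i) (Q i) (hP i) (hQ i) (hac i)
  have h2 : ∑ i, (Q i - P i) / Real.log 2 ≤ 0 := by
    rw [← Finset.sum_div]
    apply div_nonpos_of_nonpos_of_nonneg _ hlog2.le
    rw [Finset.sum_sub_distrib]
    linarith
  have h3 : ∑ i, P i * (Real.logb 2 (Q i) - Real.logb 2 (P i))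
      = ∑ i, P i * Real.logb 2 (Q i) - ∑ i, P i * Real.logb 2 (P i) := by
    rw [← Finset.sum_sub_distrib]; congr 1; ext i; ring
  linarith

lemma sum_comm3' {γ α β M : Type*} [AddCommMonoid M] [Fintype γ] [Fintype α] [Fintype β]
    (f : γ → α → β → M) : ∑ c, ∑ a, ∑ b, f c a b = ∑ a, ∑ b, ∑ c, f c a b := by
  rw [Finset.sum_comm]
  exact Finset.sum_congr rfl fun a _ => Finset.sum_comm

lemma sum_comm3'' {γ α β M : Type*} [AddCommMonoid M] [Fintype γ] [Fintype α] [Fintype β]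
    (f : γ → β → α → M) : ∑ c, ∑ b, ∑ a, f c b a = ∑ a, ∑ b, ∑ c, f c b a := by
  rw [sum_comm3']
  exact Finset.sum_comm

/-- For finite discrete random variables `X, Y` and a `{0,1}`-valued `S`
(modelled by `Bool`) with `S` independent of `X`,
`I(X;Y) ≥ P(S=1) · I(X;Y|S=1) − H(S)`, where `I(X;Y|S=1)` is the mutual information
under the conditional distribution given `S = 1`. -/
theorem stmt_6 {α β : Type*} [Fintype α] [Fintype β]
    (p : α × β × Bool → ℝ) (hp0 : ∀ z, 0 ≤ p z) (hp1 : ∑ z, p z = 1)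
    (pX : α → ℝ) (hpX : ∀ a, pX a = ∑ b, ∑ s, p (a, b, s))
    (pY : β → ℝ) (hpY : ∀ b, pY b = ∑ a, ∑ s, p (a, b, s))
    (pS : Bool → ℝ) (hpS : ∀ s, pS s = ∑ a, ∑ b, p (a, b, s))
    (pXY : α × β → ℝ) (hpXY : ∀ a b, pXY (a, b) = ∑ s, p (a, b, s))
    (hindep : ∀ a s, (∑ b, p (a, b, s)) = pX a * pS s) :
    -- conditional joint distribution of (X,Y) given S = 1
    let p1 : α × β → ℝ := fun z => p (z.1, z.2, true) / pS true
    let pX1 : α → ℝ := fun a => ∑ b, p1 (a, b)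
    let pY1 : β → ℝ := fun b => ∑ a, p1 (a, b)
    -- I(X;Y|S=1)
    let I1 : ℝ := ent pX1 + ent pY1 - ent p1
    pS true * I1 - ent pS ≤ ent pX + ent pY - ent pXY := by
  intro p1 pX1 pY1 I1
  have hp0' : ∀ a b s, 0 ≤ p (a, b, s) := fun a b s => hp0 _
  have htot : ∑ a, ∑ b, ∑ s, p (a, b, s) = 1 := by
    rw [← hp1]; simp only [Fintype.sum_prod_type]
  have hpX0 : ∀ a, 0 ≤ pX a := fun a => by
    rw [hpX]; exact Finset.sum_nonneg fun b _ => Finset.sum_nonneg fun s _ => hp0' a b s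
  have hpY0 : ∀ b, 0 ≤ pY b := fun b => by
    rw [hpY]; exact Finset.sum_nonneg fun a _ => Finset.sum_nonneg fun s _ => hp0' a b s
  have hpS0 : ∀ s, 0 ≤ pS s := fun s => by
    rw [hpS]; exact Finset.sum_nonneg fun a _ => Finset.sum_nonneg fun b _ => hp0' a b s
  have hB0 : ∀ b s, 0 ≤ ∑ a, p (a, b, s) := fun b s => Finset.sum_nonneg fun a _ => hp0' a b s
  have hXsum : ∑ a, pX a = 1 := by simp only [hpX]; exact htot
  have hYsum : ∑ b, pY b = 1 := by simp only [hpY]; rw [Finset.sum_comm]; exact htot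
  have hSsum : ∑ s, pS s = 1 := by simp only [hpS]; rw [sum_comm3']; exact htot
  have hsingle_s : ∀ a b s, p (a, b, s) ≤ ∑ s', p (a, b, s') := fun a b s =>
    Finset.single_le_sum (fun i _ => hp0' a b i) (Finset.mem_univ s)
  have hsingle_a : ∀ a b s, p (a, b, s) ≤ ∑ a', p (a', b, s) := fun a b s =>
    Finset.single_le_sum (f := fun a' => p (a', b, s)) (fun i _ => hp0' i b s)
      (Finset.mem_univ a)
  have hle_pX : ∀ a b s, p (a, b, s) ≤ pX a := fun a b s => by
    rw [hpX]
    calc p (a, b, s) ≤ ∑ s', p (a, b, s') := hsingle_s a b s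
      _ ≤ ∑ b', ∑ s', p (a, b', s') :=
        Finset.single_le_sum (f := fun b' => ∑ s', p (a, b', s'))
          (fun i _ => Finset.sum_nonneg fun s' _ => hp0' a i s') (Finset.mem_univ b)
  have hB_le_pY : ∀ b s, (∑ a, p (a, b, s)) ≤ pY b := fun b s => by
    rw [hpY]; exact Finset.sum_le_sum fun a _ => hsingle_s a b s
  have hB_le_pS : ∀ b s, (∑ a, p (a, b, s)) ≤ pS s := fun b s => by
    rw [hpS]
    exact Finset.sum_le_sum fun a _ =>
      Finset.single_le_sum (f := fun b' => p (a, b', s)) (fun i _ => hp0' a i s)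
        (Finset.mem_univ b)
  -- the four entropies as triple sums
  have e1 : ent pX = -∑ a, ∑ b, ∑ s, p (a, b, s) *
      Real.logb 2 (∑ b', ∑ s', p (a, b', s')) := by
    unfold ent; congr 1
    refine Finset.sum_congr rfl fun a _ => ?_
    rw [hpX a]; simp only [Finset.sum_mul]
  have e2 : ent pY = -∑ a, ∑ b, ∑ s, p (a, b, s) *
      Real.logb 2 (∑ a', ∑ s', p (a', b, s')) := by
    unfold ent
    have h : ∀ b, pY b * Real.logb 2 (pY b)
        = ∑ a, ∑ s, p (a, b, s) * Real.logb 2 (∑ a', ∑ s', p (a', b, s')) := fun b => by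
      rw [hpY b]; simp only [Finset.sum_mul]
    simp only [h]; congr 1; exact Finset.sum_comm
  have e3 : ent pS = -∑ a, ∑ b, ∑ s, p (a, b, s) *
      Real.logb 2 (∑ a', ∑ b', p (a', b', s)) := by
    unfold ent
    have h : ∀ s, pS s * Real.logb 2 (pS s)
        = ∑ a, ∑ b, p (a, b, s) * Real.logb 2 (∑ a', ∑ b', p (a', b', s)) := fun s => by
      rw [hpS s]; simp only [Finset.sum_mul]
    simp only [h]; congr 1; exact sum_comm3' _
  have e4 : ent pXY = -∑ a, ∑ b, ∑ s, p (a, b, s) *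
      Real.logb 2 (∑ s', p (a, b, s')) := by
    unfold ent; congr 1
    rw [Fintype.sum_prod_type]
    refine Finset.sum_congr rfl fun a _ => Finset.sum_congr rfl fun b _ => ?_
    rw [hpXY a b]; simp only [Finset.sum_mul]
  -- J true = pS true * I1
  have hJt : pS true * I1 = ∑ a, ∑ b, p (a, b, true) *
      (Real.logb 2 (p (a, b, true)) - Real.logb 2 (∑ b', ∑ s', p (a, b', s')) -
        Real.logb 2 (∑ a', p (a', b, true))) := by
    by_cases hs : pS true = 0
    · have h0 : ∑ a, ∑ b, p (a, b, true) = 0 := by rw [← hpS true, hs]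
      have hz : ∀ a b, p (a, b, true) = 0 := by
        intro a b
        have h1 := (Finset.sum_eq_zero_iff_of_nonneg
          (fun a _ => Finset.sum_nonneg fun b _ => hp0' a b true)).mp h0 a (Finset.mem_univ a)
        exact (Finset.sum_eq_zero_iff_of_nonneg (fun b _ => hp0' a b true)).mp h1 b
          (Finset.mem_univ b)
      rw [hs, zero_mul]
      symm
      refine Finset.sum_eq_zero fun a _ => Finset.sum_eq_zero fun b _ => ?_
      rw [hz a b, zero_mul]
    · have hX1 : pX1 = pX := funext fun a => by
        show (∑ b, p (a, b, true) / pS true) = pX a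
        rw [← Finset.sum_div, hindep a true, mul_div_assoc, div_self hs, mul_one]
      have hBsum : ∑ b, ∑ a, p (a, b, true) = pS true := by
        rw [Finset.sum_comm]; exact (hpS true).symm
      have claim : ∀ B : ℝ, pS true * (B / pS true * Real.logb 2 (B / pS true))
          = B * Real.logb 2 B - B * Real.logb 2 (pS true) := by
        intro B
        by_cases hBz : B = 0
        · simp [hBz]
        · rw [Real.logb_div hBz hs]
          field_simp
      have hY1form : ∀ b, pY1 b = (∑ a, p (a, b, true)) / pS true := fun b => by
        show (∑ a, p (a, b, true) / pS true) = _
        rw [Finset.sum_div]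
      have hY1 : pS true * ent pY1
          = -(∑ b, (∑ a, p (a, b, true)) * Real.logb 2 (∑ a, p (a, b, true)))
            + pS true * Real.logb 2 (pS true) := by
        unfold ent
        rw [mul_neg, Finset.mul_sum]
        have h : ∀ b, pS true * (pY1 b * Real.logb 2 (pY1 b))
            = (∑ a, p (a, b, true)) * Real.logb 2 (∑ a, p (a, b, true))
              - (∑ a, p (a, b, true)) * Real.logb 2 (pS true) := fun b => by
          rw [hY1form b]; exact claim _
        simp only [h]
        rw [Finset.sum_sub_distrib, ← Finset.sum_mul, hBsum]
        ring
      have hP1 : pS true * ent p1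
          = -(∑ a, ∑ b, p (a, b, true) * Real.logb 2 (p (a, b, true)))
            + pS true * Real.logb 2 (pS true) := by
        unfold ent
        rw [mul_neg, Finset.mul_sum, Fintype.sum_prod_type]
        have h : ∀ a b, pS true * (p1 (a, b) * Real.logb 2 (p1 (a, b)))
            = p (a, b, true) * Real.logb 2 (p (a, b, true))
              - p (a, b, true) * Real.logb 2 (pS true) := fun a b => by
          show pS true * (p (a, b, true) / pS true * Real.logb 2 (p (a, b, true) / pS true)) = _
          exact claim _
        simp only [h]
        simp only [Finset.sum_sub_distrib]
        simp only [← Finset.sum_mul]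
        rw [(hpS true).symm]
        ring
      have hentX : ent pX = -∑ a, pX a * Real.logb 2 (pX a) := rfl
      have h5 : ∑ a, ∑ b, p (a, b, true) * Real.logb 2 (∑ b', ∑ s', p (a, b', s'))
          = -(pS true * ent pX) := by
        have h : ∀ a, ∑ b, p (a, b, true) * Real.logb 2 (∑ b', ∑ s', p (a, b', s'))
            = pS true * (pX a * Real.logb 2 (pX a)) := fun a => by
          rw [← Finset.sum_mul, hindep a true, ← hpX a]
          ring
        simp only [h]
        rw [hentX, mul_neg, neg_neg, Finset.mul_sum]
      have h6 : ∑ a, ∑ b, p (a, b, true) * Real.logb 2 (∑ a', p (a', b, true))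
          = ∑ b, (∑ a, p (a, b, true)) * Real.logb 2 (∑ a, p (a, b, true)) := by
        rw [Finset.sum_comm]
        exact Finset.sum_congr rfl fun b _ => (Finset.sum_mul _ _ _).symm
      show pS true * (ent pX1 + ent pY1 - ent p1) = _
      rw [hX1, mul_sub, mul_add]
      simp only [mul_sub, Finset.sum_sub_distrib]
      rw [h5, h6]
      linarith [hY1, hP1]
  -- J false ≥ 0
  have hJf : 0 ≤ ∑ a, ∑ b, p (a, b, false) *
      (Real.logb 2 (p (a, b, false)) - Real.logb 2 (∑ b', ∑ s', p (a, b', s')) -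
        Real.logb 2 (∑ a', p (a', b, false))) := by
    have hsum : ∑ z : α × β, pX z.1 * (∑ a, p (a, z.2, false))
        ≤ ∑ z : α × β, p (z.1, z.2, false) := by
      have h1 : ∑ z : α × β, p (z.1, z.2, false) = pS false := by
        rw [Fintype.sum_prod_type]; exact (hpS false).symm
      have h2 : ∑ z : α × β, pX z.1 * (∑ a, p (a, z.2, false)) = pS false := by
        rw [Fintype.sum_prod_type]
        simp only [← Finset.mul_sum]
        have hb : ∑ b, ∑ a, p (a, b, false) = pS false := by
          rw [Finset.sum_comm]; exact (hpS false).symm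
        simp only [hb]
        rw [← Finset.sum_mul, hXsum, one_mul]
      rw [h1, h2]
    have hac : ∀ z : α × β, pX z.1 * (∑ a, p (a, z.2, false)) = 0 →
        p (z.1, z.2, false) = 0 := by
      rintro ⟨a, b⟩ h
      rcases mul_eq_zero.mp h with h | h
      · exact le_antisymm (h ▸ hle_pX a b false) (hp0' a b false)
      · exact le_antisymm (h ▸ hsingle_a a b false) (hp0' a b false)
    have hg := gibbs (fun z : α × β => p (z.1, z.2, false))
      (fun z => pX z.1 * (∑ a, p (a, z.2, false)))
      (fun z => hp0' z.1 z.2 false) (fun z => mul_nonneg (hpX0 z.1) (hB0 z.2 false))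
      hsum hac
    have hform : ∑ a, ∑ b, p (a, b, false) *
        (Real.logb 2 (p (a, b, false)) - Real.logb 2 (∑ b', ∑ s', p (a, b', s')) -
          Real.logb 2 (∑ a', p (a', b, false)))
        = (∑ z : α × β, p (z.1, z.2, false) * Real.logb 2 (p (z.1, z.2, false)))
          - ∑ z : α × β, p (z.1, z.2, false) *
              Real.logb 2 (pX z.1 * (∑ a, p (a, z.2, false))) := by
      rw [Fintype.sum_prod_type, Fintype.sum_prod_type, ← Finset.sum_sub_distrib]
      refine Finset.sum_congr rfl fun a _ => ?_
      rw [← Finset.sum_sub_distrib]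
      refine Finset.sum_congr rfl fun b _ => ?_
      by_cases hz : p (a, b, false) = 0
      · simp [hz]
      · have hppos : 0 < p (a, b, false) := lt_of_le_of_ne (hp0' a b false) (Ne.symm hz)
        have hX : pX a ≠ 0 := ne_of_gt (lt_of_lt_of_le hppos (hle_pX a b false))
        have hB : (∑ a', p (a', b, false)) ≠ 0 :=
          ne_of_gt (lt_of_lt_of_le hppos (hsingle_a a b false))
        rw [Real.logb_mul hX hB, hpX a]
        ring
    rw [hform]
    linarith [hg]
  -- I(S;Y) ≥ 0
  have hISY : 0 ≤ ∑ s, ∑ b, (∑ a, p (a, b, s)) *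
      (Real.logb 2 (∑ a, p (a, b, s)) - Real.logb 2 (∑ a, ∑ s', p (a, b, s')) -
        Real.logb 2 (∑ a, ∑ b', p (a, b', s))) := by
    have hsum : ∑ z : Bool × β, pY z.2 * pS z.1
        ≤ ∑ z : Bool × β, ∑ a, p (a, z.2, z.1) := by
      have h1 : ∑ z : Bool × β, (∑ a, p (a, z.2, z.1)) = 1 := by
        rw [Fintype.sum_prod_type]
        rw [sum_comm3'' (f := fun s b a => p (a, b, s))]
        exact htot
      have h2 : ∑ z : Bool × β, pY z.2 * pS z.1 = 1 := by
        rw [Fintype.sum_prod_type]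
        simp only [← Finset.sum_mul]
        rw [hYsum]
        simp only [one_mul]
        exact hSsum
      rw [h1, h2]
    have hac : ∀ z : Bool × β, pY z.2 * pS z.1 = 0 → (∑ a, p (a, z.2, z.1)) = 0 := by
      rintro ⟨s, b⟩ h
      rcases mul_eq_zero.mp h with h | h
      · exact le_antisymm (h ▸ hB_le_pY b s) (hB0 b s)
      · exact le_antisymm (h ▸ hB_le_pS b s) (hB0 b s)
    have hg := gibbs (fun z : Bool × β => ∑ a, p (a, z.2, z.1))
      (fun z => pY z.2 * pS z.1)
      (fun z => hB0 z.2 z.1) (fun z => mul_nonneg (hpY0 z.2) (hpS0 z.1)) hsum hac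
    have hform : ∑ s, ∑ b, (∑ a, p (a, b, s)) *
        (Real.logb 2 (∑ a, p (a, b, s)) - Real.logb 2 (∑ a, ∑ s', p (a, b, s')) -
          Real.logb 2 (∑ a, ∑ b', p (a, b', s)))
        = (∑ z : Bool × β, (∑ a, p (a, z.2, z.1)) * Real.logb 2 (∑ a, p (a, z.2, z.1)))
          - ∑ z : Bool × β, (∑ a, p (a, z.2, z.1)) * Real.logb 2 (pY z.2 * pS z.1) := by
      rw [Fintype.sum_prod_type, Fintype.sum_prod_type, ← Finset.sum_sub_distrib]
      refine Finset.sum_congr rfl fun s _ => ?_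
      rw [← Finset.sum_sub_distrib]
      refine Finset.sum_congr rfl fun b _ => ?_
      by_cases hz : (∑ a, p (a, b, s)) = 0
      · simp [hz]
      · have hBpos : 0 < ∑ a, p (a, b, s) := lt_of_le_of_ne (hB0 b s) (Ne.symm hz)
        have hY : pY b ≠ 0 := ne_of_gt (lt_of_lt_of_le hBpos (hB_le_pY b s))
        have hS : pS s ≠ 0 := ne_of_gt (lt_of_lt_of_le hBpos (hB_le_pS b s))
        rw [Real.logb_mul hY hS, hpY b, hpS s]
        ring
    rw [hform]
    linarith [hg]
  -- H(S|X,Y) ≥ 0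
  have hH : 0 ≤ ∑ a, ∑ b, ∑ s, p (a, b, s) *
      (Real.logb 2 (∑ s', p (a, b, s')) - Real.logb 2 (p (a, b, s))) := by
    refine Finset.sum_nonneg fun a _ => Finset.sum_nonneg fun b _ =>
      Finset.sum_nonneg fun s _ => ?_
    by_cases hz : p (a, b, s) = 0
    · simp [hz]
    · have hppos : 0 < p (a, b, s) := lt_of_le_of_ne (hp0' a b s) (Ne.symm hz)
      have hmono : Real.logb 2 (p (a, b, s)) ≤ Real.logb 2 (∑ s', p (a, b, s')) :=
        Real.logb_le_logb_of_le (by norm_num) hppos (hsingle_s a b s)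
      exact mul_nonneg (hp0' a b s) (by linarith)
  -- key identity
  have eJ : (∑ a, ∑ b, p (a, b, false) *
      (Real.logb 2 (p (a, b, false)) - Real.logb 2 (∑ b', ∑ s', p (a, b', s')) -
        Real.logb 2 (∑ a', p (a', b, false))))
      + (∑ a, ∑ b, p (a, b, true) *
      (Real.logb 2 (p (a, b, true)) - Real.logb 2 (∑ b', ∑ s', p (a, b', s')) -
        Real.logb 2 (∑ a', p (a', b, true))))
      = ∑ a, ∑ b, ∑ s, p (a, b, s) *
      (Real.logb 2 (p (a, b, s)) - Real.logb 2 (∑ b', ∑ s', p (a, b', s')) -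
        Real.logb 2 (∑ a', p (a', b, s))) := by
    rw [← sum_comm3' (f := fun s a b => p (a, b, s) *
      (Real.logb 2 (p (a, b, s)) - Real.logb 2 (∑ b', ∑ s', p (a, b', s')) -
        Real.logb 2 (∑ a', p (a', b, s))))]
    rw [Fintype.sum_bool]
    ring
  have eISY : ∑ s, ∑ b, (∑ a, p (a, b, s)) *
      (Real.logb 2 (∑ a, p (a, b, s)) - Real.logb 2 (∑ a, ∑ s', p (a, b, s')) -
        Real.logb 2 (∑ a, ∑ b', p (a, b', s)))
      = ∑ a, ∑ b, ∑ s, p (a, b, s) *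
      (Real.logb 2 (∑ a', p (a', b, s)) - Real.logb 2 (∑ a', ∑ s', p (a', b, s')) -
        Real.logb 2 (∑ a', ∑ b', p (a', b', s))) := by
    simp only [Finset.sum_mul]
    exact sum_comm3'' _
  have key : ent pX + ent pY + ent pS - ent pXY
      = ((∑ a, ∑ b, p (a, b, false) *
      (Real.logb 2 (p (a, b, false)) - Real.logb 2 (∑ b', ∑ s', p (a, b', s')) -
        Real.logb 2 (∑ a', p (a', b, false))))
      + (∑ a, ∑ b, p (a, b, true) *
      (Real.logb 2 (p (a, b, true)) - Real.logb 2 (∑ b', ∑ s', p (a, b', s')) -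
        Real.logb 2 (∑ a', p (a', b, true)))))
      + (∑ s, ∑ b, (∑ a, p (a, b, s)) *
      (Real.logb 2 (∑ a, p (a, b, s)) - Real.logb 2 (∑ a, ∑ s', p (a, b, s')) -
        Real.logb 2 (∑ a, ∑ b', p (a, b', s))))
      + (∑ a, ∑ b, ∑ s, p (a, b, s) *
      (Real.logb 2 (∑ s', p (a, b, s')) - Real.logb 2 (p (a, b, s)))) := by
    rw [e1, e2, e3, e4, eJ, eISY]
    simp only [← Finset.sum_neg_distrib, ← Finset.sum_sub_distrib, ← Finset.sum_add_distrib]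
    refine Finset.sum_congr rfl fun a _ => Finset.sum_congr rfl fun b _ =>
      Finset.sum_congr rfl fun s _ => ?_
    ring
  linarith [hJt, hJf, hISY, hH, key]
end

section
/- The entropy of a Poisson random variable Z_λ with parameter λ > 0 satisfies H(Z_λ) ≤ (1/2) log₂(2πe(λ + 1/12)). -/
open Real MeasureTheory

/-- The Gaussian density with mean `m`, variance `s2`, written in exponential form,
integrates to 1 over ℝ. -/
lemma aux13_gauss_integral (s2 m : ℝ) (hs2 : 0 < s2) :
    ∫ y : ℝ, exp (-(1/2) * log (2*π*s2) - (y - m)^2 / (2*s2)) = 1 := by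
  have hb : (0:ℝ) < 1/(2*s2) := by positivity
  have h1 : ∀ y : ℝ, exp (-(1/2) * log (2*π*s2) - (y - m)^2 / (2*s2))
      = exp (-(1/2) * log (2*π*s2)) * exp (-(1/(2*s2)) * (y - m)^2) := by
    intro y
    rw [← Real.exp_add]
    congr 1
    field_simp
    ring
  simp_rw [h1]
  rw [MeasureTheory.integral_const_mul]
  rw [integral_sub_right_eq_self (fun x : ℝ => exp (-(1/(2*s2)) * x^2)) m]
  rw [integral_gaussian]
  have hV : (0:ℝ) < 2*π*s2 := by positivity
  have h2 : π / (1/(2*s2)) = 2*π*s2 := by field_simp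
  rw [h2]
  have hsq : (-(1/2) : ℝ) * log (2*π*s2) = log ((Real.sqrt (2*π*s2))⁻¹) := by
    rw [Real.log_inv, Real.log_sqrt hV.le]
    ring
  rw [hsq, Real.exp_log (by positivity), inv_mul_cancel₀ (ne_of_gt (Real.sqrt_pos.mpr hV))]

lemma aux13_gauss_integrable (s2 m : ℝ) (hs2 : 0 < s2) :
    Integrable (fun y : ℝ => exp (-(1/2) * log (2*π*s2) - (y - m)^2 / (2*s2))) := by
  have hb : (0:ℝ) < 1/(2*s2) := by positivity
  have h1 : ∀ y : ℝ, exp (-(1/2) * log (2*π*s2) - (y - m)^2 / (2*s2))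
      = exp (-(1/2) * log (2*π*s2)) * exp (-(1/(2*s2)) * (y - m)^2) := by
    intro y
    rw [← Real.exp_add]
    congr 1
    field_simp
    ring
  simp_rw [h1]
  exact ((integrable_exp_neg_mul_sq hb).comp_sub_right m).const_mul _

/-- Jensen-type bound: `exp(-c_a) ≤ ∫_a^{a+1} g` for the Gaussian `g`. -/
lemma aux13_interval_bound (s2 m : ℝ) (hs2 : 0 < s2) (a : ℝ) :
    exp (-((1/2) * log (2*π*s2) + ((a-m)^2 + (a-m) + 1/3) / (2*s2)))
      ≤ ∫ y in a..(a+1), exp (-(1/2) * log (2*π*s2) - (y - m)^2 / (2*s2)) := by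
  set c : ℝ := (1/2) * log (2*π*s2) + ((a-m)^2 + (a-m) + 1/3) / (2*s2) with hc
  set L : ℝ → ℝ := fun y => -(1/2) * log (2*π*s2) - (y - m)^2 / (2*s2) with hL
  have hcontL : Continuous L := by
    apply Continuous.sub continuous_const
    exact ((continuous_id.sub continuous_const).pow 2).div_const _
  have hpt : ∀ y ∈ Set.Icc a (a+1), exp (-c) * (1 + (L y + c)) ≤ exp (L y) := by
    intro y _
    have h := Real.add_one_le_exp (L y + c)
    calc exp (-c) * (1 + (L y + c)) ≤ exp (-c) * exp (L y + c) := by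
          apply mul_le_mul_of_nonneg_left _ (Real.exp_nonneg _)
          linarith
      _ = exp (L y) := by rw [← Real.exp_add]; ring_nf
  have hint1 : IntervalIntegrable (fun y => exp (-c) * (1 + (L y + c))) volume a (a+1) :=
    (Continuous.intervalIntegrable (by continuity) _ _)
  have hint2 : IntervalIntegrable (fun y => exp (L y)) volume a (a+1) :=
    (Continuous.intervalIntegrable (hcontL.rexp) _ _)
  have hmono := intervalIntegral.integral_mono_on (by linarith : a ≤ a + 1) hint1 hint2 hpt
  refine le_trans (le_of_eq ?_) hmono
  -- compute ∫ exp(-c) * (1 + L y + c)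
  have heq : ∀ y : ℝ, exp (-c) * (1 + (L y + c)) =
      exp (-c) * ((1 + c - (1/2) * log (2*π*s2)) - (y - m)^2 * (1/(2*s2))) := by
    intro y
    simp only [hL]
    ring
  simp_rw [heq]
  rw [intervalIntegral.integral_const_mul]
  rw [intervalIntegral.integral_sub ((continuous_const : Continuous fun _ : ℝ => (1 + c - (1/2) * log (2*π*s2))).intervalIntegrable _ _)
    ((Continuous.intervalIntegrable (by continuity) _ _ : IntervalIntegrable (fun y : ℝ => (y - m)^2 * (1/(2*s2))) volume a (a+1)))]
  rw [intervalIntegral.integral_const]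
  rw [intervalIntegral.integral_mul_const]
  rw [intervalIntegral.integral_comp_sub_right (fun y => y^2) m, integral_pow]
  have hs2' : s2 ≠ 0 := ne_of_gt hs2
  simp only [smul_eq_mul, hc]
  have hs2'' : (2:ℝ) * s2 ≠ 0 := by positivity
  field_simp
  ring

/-- Gibbs-type pointwise inequality. -/
lemma aux13_gibbs (p c : ℝ) (hp : 0 < p) :
    -(p * log p) ≤ p * c - p + exp (-c) := by
  have hpe : 0 < p * exp c := by positivity
  have h := Real.one_sub_inv_le_log_of_pos hpe
  have h2 : p * (1 - (p * exp c)⁻¹) ≤ p * log (p * exp c) :=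
    mul_le_mul_of_nonneg_left h hp.le
  rw [Real.log_mul (ne_of_gt hp) (Real.exp_ne_zero _), Real.log_exp] at h2
  have h3 : p * (1 - (p * exp c)⁻¹) = p - exp (-c) := by
    rw [Real.exp_neg]
    field_simp
  rw [h3] at h2
  nlinarith [Real.exp_pos (-c)]

/-- The Shannon entropy (in bits) of a Poisson random variable `Z_λ` with
parameter `λ > 0` satisfies `H(Z_λ) ≤ (1/2) log₂ (2πe(λ + 1/12))`. -/
theorem stmt_13 (lam : ℝ) (hlam : 0 < lam) :
    -- pmf of Poisson(λ): P(Z = k) = e^{-λ} λ^k / k!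
    let pois : ℕ → ℝ := fun k => Real.exp (-lam) * lam ^ k / (Nat.factorial k)
    -- entropy in bits
    (∑' k : ℕ, -(pois k * Real.logb 2 (pois k)))
      ≤ (1 / 2) * Real.logb 2 (2 * Real.pi * Real.exp 1 * (lam + 1 / 12)) := by
  intro pois
  have hpois : ∀ k, pois k = Real.exp (-lam) * lam ^ k / (Nat.factorial k) := fun k => rfl
  set s2 : ℝ := lam + 1/12 with hs2def
  have hs2 : 0 < s2 := by positivity
  set m : ℝ := lam + 1/2 with hmdef
  have hV : (0:ℝ) < 2*π*s2 := by positivity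
  set c : ℕ → ℝ := fun k => (1/2) * log (2*π*s2) + (((k:ℝ)-m)^2 + ((k:ℝ)-m) + 1/3) / (2*s2)
    with hcdef
  have hee : Real.exp (-lam) * Real.exp lam = 1 := by
    rw [← Real.exp_add]; simp
  -- moments of the Poisson distribution
  have hexp : HasSum (fun k : ℕ => lam ^ k / (Nat.factorial k)) (Real.exp lam) := by
    rw [Real.exp_eq_exp_ℝ]; exact NormedSpace.expSeries_div_hasSum_exp lam
  have hmean0 : HasSum (fun k : ℕ => (k:ℝ) * lam ^ k / (Nat.factorial k))
      (lam * Real.exp lam) := by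
    have hshift : HasSum (fun k : ℕ => ((k+1:ℕ):ℝ) * lam ^ (k+1) / (Nat.factorial (k+1)))
        (lam * Real.exp lam) := by
      apply (hexp.mul_left lam).congr_fun
      intro k
      rw [Nat.factorial_succ]
      push_cast [pow_succ]
      have hk : ((k:ℝ) + 1) ≠ 0 := by positivity
      field_simp
    have := (hasSum_nat_add_iff (f := fun k : ℕ => (k:ℝ) * lam ^ k / (Nat.factorial k)) 1).mp
      (by simpa using hshift)
    simpa using this
  have hsq0 : HasSum (fun k : ℕ => ((k:ℝ))^2 * lam ^ k / (Nat.factorial k))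
      (lam^2 * Real.exp lam + lam * Real.exp lam) := by
    have hshift : HasSum (fun k : ℕ => (((k+1:ℕ)):ℝ)^2 * lam ^ (k+1) / (Nat.factorial (k+1)))
        (lam^2 * Real.exp lam + lam * Real.exp lam) := by
      have h := (hmean0.mul_left lam).add (hexp.mul_left lam)
      rw [show lam * (lam * Real.exp lam) + lam * Real.exp lam
          = lam^2 * Real.exp lam + lam * Real.exp lam by ring] at h
      apply h.congr_fun
      intro k
      rw [Nat.factorial_succ]
      push_cast [pow_succ]
      have hk : ((k:ℝ) + 1) ≠ 0 := by positivity
      field_simp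
    have := (hasSum_nat_add_iff (f := fun k : ℕ => ((k:ℝ))^2 * lam ^ k / (Nat.factorial k)) 1).mp
      (by simpa using hshift)
    simpa using this
  -- pois-weighted sums
  have hp1 : HasSum pois 1 := by
    have := hexp.mul_left (Real.exp (-lam))
    rw [← mul_comm (Real.exp lam) (Real.exp (-lam)), mul_comm (Real.exp lam)] at this
    rw [show (1:ℝ) = Real.exp (-lam) * Real.exp lam from hee.symm]
    apply this.congr_fun
    intro k
    rw [hpois]
    ring
  have hpk : HasSum (fun k : ℕ => pois k * (k:ℝ)) lam := by
    have := hmean0.mul_left (Real.exp (-lam))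
    rw [show Real.exp (-lam) * (lam * Real.exp lam) = lam * (Real.exp (-lam) * Real.exp lam)
      by ring, hee, mul_one] at this
    apply this.congr_fun
    intro k
    rw [hpois]
    ring
  have hpk2 : HasSum (fun k : ℕ => pois k * ((k:ℝ))^2) (lam^2 + lam) := by
    have := hsq0.mul_left (Real.exp (-lam))
    rw [show Real.exp (-lam) * (lam^2 * Real.exp lam + lam * Real.exp lam)
      = (lam^2 + lam) * (Real.exp (-lam) * Real.exp lam) by ring, hee, mul_one] at this
    apply this.congr_fun
    intro k
    rw [hpois]
    ring
  have hp_pos : ∀ k, 0 < pois k := by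
    intro k
    rw [hpois]
    positivity
  have hp_le_one : ∀ k, pois k ≤ 1 := by
    intro k
    exact le_hasSum hp1 k (fun j _ => (hp_pos j).le)
  -- sum of pois * c
  have hquad : HasSum (fun k : ℕ => pois k * (((k:ℝ)-m)^2 + ((k:ℝ)-m) + 1/3)) s2 := by
    have h := (hpk2.add (hpk.mul_left (1 - 2*m))).add (hp1.mul_left (m^2 - m + 1/3))
    have hval : lam^2 + lam + (1 - 2*m) * lam + (m^2 - m + 1/3) * 1 = s2 := by
      rw [hmdef, hs2def]
      ring
    rw [hval] at h
    apply h.congr_fun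
    intro k
    ring
  have hpc : HasSum (fun k : ℕ => pois k * c k) ((1/2) * log (2*π*s2) + 1/2) := by
    have h := (hp1.mul_left ((1/2) * log (2*π*s2))).add (hquad.mul_left (1/(2*s2)))
    have hval : (1/2) * log (2*π*s2) * 1 + (1/(2*s2)) * s2 = (1/2) * log (2*π*s2) + 1/2 := by
      field_simp
    rw [hval] at h
    apply h.congr_fun
    intro k
    rw [hcdef]
    simp only
    field_simp
  -- the Gaussian sub-probability weights
  have hec_le : ∀ k : ℕ, exp (-(c k)) ≤ ∫ y in (k:ℝ)..((k:ℝ)+1),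
      exp (-(1/2) * log (2*π*s2) - (y - m)^2 / (2*s2)) := fun k =>
    aux13_interval_bound s2 m hs2 (k:ℝ)
  have hg_int : Integrable (fun y : ℝ => exp (-(1/2) * log (2*π*s2) - (y - m)^2 / (2*s2))) :=
    aux13_gauss_integrable s2 m hs2
  have hg_nonneg : ∀ y : ℝ, 0 ≤ exp (-(1/2) * log (2*π*s2) - (y - m)^2 / (2*s2)) :=
    fun y => (Real.exp_pos _).le
  have hpartial : ∀ n : ℕ, ∑ k ∈ Finset.range n, exp (-(c k)) ≤ 1 := by
    intro n
    have hsum_int : ∑ k ∈ Finset.range n, (∫ y in (k:ℝ)..((k:ℝ)+1),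
        exp (-(1/2) * log (2*π*s2) - (y - m)^2 / (2*s2)))
        = ∫ y in (0:ℝ)..(n:ℝ), exp (-(1/2) * log (2*π*s2) - (y - m)^2 / (2*s2)) := by
      have := intervalIntegral.sum_integral_adjacent_intervals
        (a := fun k : ℕ => (k:ℝ))
        (f := fun y => exp (-(1/2) * log (2*π*s2) - (y - m)^2 / (2*s2)))
        (μ := volume) (n := n)
        (fun i _ => hg_int.intervalIntegrable)
      simpa using this
    calc ∑ k ∈ Finset.range n, exp (-(c k))
        ≤ ∑ k ∈ Finset.range n, (∫ y in (k:ℝ)..((k:ℝ)+1),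
            exp (-(1/2) * log (2*π*s2) - (y - m)^2 / (2*s2))) :=
          Finset.sum_le_sum (fun k _ => hec_le k)
      _ = ∫ y in (0:ℝ)..(n:ℝ), exp (-(1/2) * log (2*π*s2) - (y - m)^2 / (2*s2)) := hsum_int
      _ ≤ ∫ y : ℝ, exp (-(1/2) * log (2*π*s2) - (y - m)^2 / (2*s2)) := by
          rw [intervalIntegral.integral_of_le (by positivity : (0:ℝ) ≤ (n:ℝ))]
          exact setIntegral_le_integral hg_int (Filter.Eventually.of_forall hg_nonneg)
      _ = 1 := aux13_gauss_integral s2 m hs2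
  have hec_nonneg : ∀ k : ℕ, 0 ≤ exp (-(c k)) := fun k => (Real.exp_pos _).le
  have hec_summable : Summable (fun k : ℕ => exp (-(c k))) :=
    summable_of_sum_range_le hec_nonneg hpartial
  have hec_tsum : (∑' k : ℕ, exp (-(c k))) ≤ 1 :=
    Real.tsum_le_of_sum_range_le hec_nonneg hpartial
  -- Gibbs comparison
  have hterm : ∀ k : ℕ, -(pois k * log (pois k)) ≤ pois k * c k - pois k + exp (-(c k)) :=
    fun k => aux13_gibbs (pois k) (c k) (hp_pos k)
  have hterm_nonneg : ∀ k : ℕ, 0 ≤ -(pois k * log (pois k)) := by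
    intro k
    have := Real.log_nonpos (hp_pos k).le (hp_le_one k)
    nlinarith [hp_pos k]
  have hRHS_summable : Summable (fun k : ℕ => pois k * c k - pois k + exp (-(c k))) :=
    ((hpc.summable.sub hp1.summable).add hec_summable)
  have hLHS_summable : Summable (fun k : ℕ => -(pois k * log (pois k))) :=
    Summable.of_nonneg_of_le hterm_nonneg hterm hRHS_summable
  have hnats : (∑' k : ℕ, -(pois k * log (pois k))) ≤ (1/2) * log (2*π*s2) + 1/2 := by
    calc (∑' k : ℕ, -(pois k * log (pois k)))
        ≤ ∑' k : ℕ, (pois k * c k - pois k + exp (-(c k))) :=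
          Summable.tsum_le_tsum hterm hLHS_summable hRHS_summable
      _ = ((1/2) * log (2*π*s2) + 1/2) - 1 + (∑' k : ℕ, exp (-(c k))) :=
          ((hpc.sub hp1).add hec_summable.hasSum).tsum_eq
      _ ≤ (1/2) * log (2*π*s2) + 1/2 := by linarith [hec_tsum]
  -- convert to base-2 logarithms
  have hlog2 : (0:ℝ) < log 2 := Real.log_pos (by norm_num)
  have hRHSlog : log (2*π*Real.exp 1*(lam + 1/12)) = log (2*π*s2) + 1 := by
    rw [show 2*π*Real.exp 1*(lam + 1/12) = (2*π*s2) * Real.exp 1 by rw [hs2def]; ring,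
      Real.log_mul (ne_of_gt hV) (Real.exp_ne_zero 1), Real.log_exp]
  calc (∑' k : ℕ, -(pois k * Real.logb 2 (pois k)))
      = ∑' k : ℕ, (-(pois k * log (pois k)) * (log 2)⁻¹) :=
        tsum_congr (fun k => by rw [Real.logb]; ring)
    _ = (∑' k : ℕ, -(pois k * log (pois k))) * (log 2)⁻¹ := tsum_mul_right
    _ ≤ ((1/2) * log (2*π*s2) + 1/2) * (log 2)⁻¹ :=
        mul_le_mul_of_nonneg_right hnats (inv_nonneg.mpr hlog2.le)
    _ = (1/2) * Real.logb 2 (2 * Real.pi * Real.exp 1 * (lam + 1/12)) := by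
        rw [Real.logb, hRHSlog]
        field_simp
end

section
/- Let a channel with input X (taking 2^L values) and output Y be followed by a deterministic post-processing map g that is injective on a subset B₁ of output values and maps all outputs outside B₁ to a single symbol. Then I(X; g(Y)) ≤ I(X; Y), and if the event {Y ∈ B₁} is independent of X, I(X; g(Y)) = P(B₁) · I₁ + I(X; 1_{Y∈B₁}), where I₁ is the mutual information of the channel restricted (conditioned) to outputs in B₁. -/
open Finset

lemma mul_logb_mul' (x y : ℝ) :
    (x*y) * Real.logb 2 (x*y) = (x*y) * Real.logb 2 x + (x*y) * Real.logb 2 y := by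
  rcases eq_or_ne x 0 with h|h
  · simp [h]
  rcases eq_or_ne y 0 with h'|h'
  · simp [h']
  rw [Real.logb_mul h h']; ring

lemma mul_logb_div' (x c : ℝ) (hc : c ≠ 0) :
    x * Real.logb 2 (x / c) = x * Real.logb 2 x - x * Real.logb 2 c := by
  rcases eq_or_ne x 0 with h|h
  · simp [h]
  rw [Real.logb_div h hc]; ring

lemma core_ineq (u v : ℝ) (hu : 0 ≤ u) (hv : 0 ≤ v) (h : u ≠ 0 → v ≠ 0) :
    u - v ≤ u * Real.log u - u * Real.log v := by
  rcases eq_or_ne u 0 with h0|h0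
  · simp [h0]; linarith
  have hu' : 0 < u := lt_of_le_of_ne hu (Ne.symm h0)
  have hv' : 0 < v := lt_of_le_of_ne hv (Ne.symm (h h0))
  have key := Real.log_le_sub_one_of_pos (x := v/u) (by positivity)
  rw [Real.log_div hv'.ne' hu'.ne'] at key
  have h2 : u * (v/u - 1) = v - u := by field_simp
  nlinarith

lemma core_ineq_b (u v : ℝ) (hu : 0 ≤ u) (hv : 0 ≤ v) (h : u ≠ 0 → v ≠ 0) :
    u - v ≤ (u * Real.logb 2 u - u * Real.logb 2 v) * Real.log 2 := by
  have h1 := core_ineq u v hu hv h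
  have hl2 : Real.log 2 ≠ 0 := (Real.log_pos (by norm_num)).ne'
  have h2 : (u * Real.logb 2 u - u * Real.logb 2 v) * Real.log 2
      = u * Real.log u - u * Real.log v := by
    simp only [Real.logb]; field_simp
  linarith

lemma reindex {β δ : Type*} [Fintype β] [Fintype δ] [DecidableEq β] [DecidableEq δ]
    (B₁ : Finset β) (g : β → δ)
    (hg_inj : ∀ y ∈ B₁, ∀ y' ∈ B₁, g y = g y' → y = y')
    (hg_sep : ∀ y ∈ B₁, ∀ y' ∉ B₁, g y ≠ g y')
    (hg_const : ∀ y ∉ B₁, ∀ y' ∉ B₁, g y = g y')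
    (f : ℝ → ℝ) (hf0 : f 0 = 0) (c : β → ℝ) :
    ∑ d, f (∑ b, if g b = d then c b else 0)
      = ∑ b ∈ B₁, f (c b) + f (∑ b ∈ B₁ᶜ, c b) := by
  have hfil : ∀ d, (∑ b, if g b = d then c b else 0)
      = ∑ b ∈ univ.filter (fun b => g b = d), c b := by
    intro d; rw [Finset.sum_filter]
  have himg : ∑ d, f (∑ b, if g b = d then c b else 0)
      = ∑ d ∈ univ.image g, f (∑ b, if g b = d then c b else 0) := by
    symm
    apply Finset.sum_subset (Finset.subset_univ _)
    intro d _ hd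
    have : ∀ b, (if g b = d then c b else 0) = 0 := by
      intro b
      have : g b ≠ d := fun h => hd (Finset.mem_image.2 ⟨b, Finset.mem_univ b, h⟩)
      simp [this]
    rw [Finset.sum_congr rfl (fun b _ => this b), Finset.sum_const_zero, hf0]
  rw [himg]
  have huniv : (univ : Finset β) = B₁ ∪ B₁ᶜ := by simp
  have himg2 : (univ : Finset β).image g = B₁.image g ∪ B₁ᶜ.image g := by
    rw [huniv, Finset.image_union]
  have hdisj : Disjoint (B₁.image g) (B₁ᶜ.image g) := by
    rw [Finset.disjoint_left]
    rintro d hd1 hd2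
    obtain ⟨y, hy, rfl⟩ := Finset.mem_image.1 hd1
    obtain ⟨y', hy', he⟩ := Finset.mem_image.1 hd2
    exact hg_sep y hy y' (Finset.mem_compl.1 hy') he.symm
  rw [himg2, Finset.sum_union hdisj]
  congr 1
  · rw [Finset.sum_image (fun y hy y' hy' h => hg_inj y hy y' hy' h)]
    apply Finset.sum_congr rfl
    intro b hb
    congr 1
    rw [Finset.sum_eq_single b]
    · simp
    · intro b' _ hne
      have : g b' ≠ g b := by
        by_cases hb' : b' ∈ B₁
        · exact fun h => hne (hg_inj b' hb' b hb h)
        · exact fun h => hg_sep b hb b' hb' h.symm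
      simp [this]
    · intro h; exact absurd (Finset.mem_univ b) h
  · rcases B₁ᶜ.eq_empty_or_nonempty with he|⟨b₀, hb₀⟩
    · simp [he, hf0]
    · have himgc : B₁ᶜ.image g = {g b₀} := by
        apply Finset.Subset.antisymm
        · intro d hd
          obtain ⟨y, hy, rfl⟩ := Finset.mem_image.1 hd
          simp [hg_const y (Finset.mem_compl.1 hy) b₀ (Finset.mem_compl.1 hb₀)]
        · intro d hd
          simp at hd
          exact hd ▸ Finset.mem_image.2 ⟨b₀, hb₀, rfl⟩
      rw [himgc, Finset.sum_singleton]
      congr 1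
      rw [hfil]
      apply Finset.sum_congr
      · ext b
        simp only [Finset.mem_filter, Finset.mem_univ, true_and, Finset.mem_compl]
        constructor
        · intro h hb
          exact hg_sep b hb b₀ (Finset.mem_compl.1 hb₀) h
        · intro h
          exact hg_const b h b₀ (Finset.mem_compl.1 hb₀)
      · intros; rfl

/-- A DMC with input `X` (over an alphabet of size `2^L`, input
distribution `P`, transitions `W`) is followed by a deterministic map `g` that is
injective on a subset `B₁` of outputs and maps all outputs outside `B₁` to a single
(distinct) symbol. Then `I(X; g(Y)) ≤ I(X; Y)`, and if the event `{Y ∈ B₁}` is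
independent of the input, `I(X; g(Y)) = P(B₁) · I₁ + I(X; 1_{Y∈B₁})`, where `I₁` is the
mutual information of the channel restricted (conditioned) to outputs in `B₁`. -/
theorem stmt_16 {α β δ : Type*} [Fintype α] [Fintype β] [Fintype δ]
    [DecidableEq β] [DecidableEq δ] (L : ℕ) (hcard : Fintype.card α = 2 ^ L)
    (P : α → ℝ) (hP0 : ∀ a, 0 ≤ P a) (hP1 : ∑ a, P a = 1)
    (W : α → β → ℝ) (hW0 : ∀ a b, 0 ≤ W a b) (hW1 : ∀ a, ∑ b, W a b = 1)
    (hpos : ∀ b, 0 < ∑ a, P a * W a b)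
    (B₁ : Finset β) (g : β → δ)
    (hg_inj : ∀ y ∈ B₁, ∀ y' ∈ B₁, g y = g y' → y = y')
    (hg_const : ∀ y ∉ B₁, ∀ y' ∉ B₁, g y = g y')
    (hg_sep : ∀ y ∈ B₁, ∀ y' ∉ B₁, g y ≠ g y')
    (PB₁ : ℝ) (hPB : PB₁ = ∑ b ∈ B₁, ∑ a, P a * W a b) :
    -- output distribution and joint distributions
    let q : β → ℝ := fun b => ∑ a, P a * W a b
    -- I(X;Y) = H(Y) − H(Y|X)
    let IXY : ℝ := (-∑ b, q b * Real.logb 2 (q b))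
      + ∑ a, P a * ∑ b, W a b * Real.logb 2 (W a b)
    -- joint distribution of (X, g(Y)) and I(X; g(Y))
    let pXgY : α × δ → ℝ := fun z => ∑ b, if g b = z.2 then P z.1 * W z.1 b else 0
    let IXgY : ℝ := ent P + ent (fun d => ∑ a, pXgY (a, d)) - ent pXgY
    -- mutual information of the channel restricted (conditioned) to B₁
    let I₁ : ℝ := (-∑ b ∈ B₁, (q b / PB₁) * Real.logb 2 (q b / PB₁))
      + ∑ a, P a * ∑ b ∈ B₁, (W a b / PB₁) * Real.logb 2 (W a b / PB₁)
    -- joint distribution of (X, 1_{Y∈B₁}) and I(X; 1_{Y∈B₁})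
    let pXS : α × Bool → ℝ := fun z =>
      P z.1 * (if z.2 then ∑ b ∈ B₁, W z.1 b else ∑ b ∈ B₁ᶜ, W z.1 b)
    let IXS : ℝ := ent P + ent (fun s => ∑ a, pXS (a, s)) - ent pXS
    -- conclusions
    IXgY ≤ IXY
    ∧ ((∀ a, ∑ b ∈ B₁, W a b = PB₁) → IXgY = PB₁ * I₁ + IXS) := by
  intro q IXY pXgY IXgY I₁ pXS IXS
  -- basic facts
  have hqpos : ∀ b, 0 < q b := fun b => hpos b
  have hq0 : ∀ b, 0 ≤ q b := fun b => (hqpos b).le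
  have hq1 : ∑ b, q b = 1 := by
    show (∑ b, ∑ a, P a * W a b) = 1
    rw [Finset.sum_comm]
    calc (∑ a, ∑ b, P a * W a b) = ∑ a, P a * ∑ b, W a b := by
          refine Finset.sum_congr rfl fun a _ => ?_; rw [Finset.mul_sum]
      _ = 1 := by simp only [hW1, mul_one, hP1]
  have hs0 : ∀ a, 0 ≤ ∑ b ∈ B₁ᶜ, W a b := fun a => Finset.sum_nonneg fun b _ => hW0 a b
  have hPsa : ∑ a, P a * (∑ b ∈ B₁ᶜ, W a b) = ∑ b ∈ B₁ᶜ, q b := by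
    show _ = ∑ b ∈ B₁ᶜ, ∑ a, P a * W a b
    rw [Finset.sum_comm]
    refine Finset.sum_congr rfl fun a _ => ?_; rw [Finset.mul_sum]
  have hPBq : PB₁ = ∑ b ∈ B₁, q b := hPB
  -- the joint distribution in a convenient form
  have hp : ∀ a d, pXgY (a, d) = P a * (∑ b, if g b = d then W a b else 0) := by
    intro a d
    show (∑ b, if g b = d then P a * W a b else 0) = _
    rw [Finset.mul_sum]
    refine Finset.sum_congr rfl fun b _ => ?_
    by_cases h : g b = d <;> simp [h]
  have hV1 : ∀ a, (∑ d, ∑ b, if g b = d then W a b else 0) = 1 := by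
    intro a
    rw [Finset.sum_comm]
    calc (∑ b, ∑ d, if g b = d then W a b else 0) = ∑ b, W a b := by
          refine Finset.sum_congr rfl fun b _ => ?_
          simp [Finset.sum_ite_eq]
      _ = 1 := hW1 a
  -- reindex instances
  have hWre : ∀ a, (∑ d, (∑ b, if g b = d then W a b else 0) * Real.logb 2 (∑ b, if g b = d then W a b else 0))
      = ∑ b ∈ B₁, W a b * Real.logb 2 (W a b)
        + (∑ b ∈ B₁ᶜ, W a b) * Real.logb 2 (∑ b ∈ B₁ᶜ, W a b) :=
    fun a => reindex B₁ g hg_inj hg_sep hg_const (fun x => x * Real.logb 2 x) (by simp) (fun b => W a b)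
  have hqre : (∑ d, (∑ b, if g b = d then q b else 0) * Real.logb 2 (∑ b, if g b = d then q b else 0))
      = ∑ b ∈ B₁, q b * Real.logb 2 (q b)
        + (∑ b ∈ B₁ᶜ, q b) * Real.logb 2 (∑ b ∈ B₁ᶜ, q b) :=
    reindex B₁ g hg_inj hg_sep hg_const (fun x => x * Real.logb 2 x) (by simp) q
  -- marginal of g(Y)
  have hm : ∀ d, (∑ a, pXgY (a, d)) = ∑ b, if g b = d then q b else 0 := by
    intro d
    show (∑ a, ∑ b, if g b = d then P a * W a b else 0) = _
    rw [Finset.sum_comm]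
    refine Finset.sum_congr rfl fun b _ => ?_
    by_cases h : g b = d <;> simp [h, q]
  have entM : ent (fun d => ∑ a, pXgY (a, d))
      = -(∑ b ∈ B₁, q b * Real.logb 2 (q b)
          + (∑ b ∈ B₁ᶜ, q b) * Real.logb 2 (∑ b ∈ B₁ᶜ, q b)) := by
    unfold ent
    rw [neg_inj]
    simp only [hm]
    exact hqre
  -- joint entropy
  have hrow : ∀ a, (∑ d, pXgY (a, d) * Real.logb 2 (pXgY (a, d)))
      = P a * Real.logb 2 (P a)
        + P a * (∑ b ∈ B₁, W a b * Real.logb 2 (W a b)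
          + (∑ b ∈ B₁ᶜ, W a b) * Real.logb 2 (∑ b ∈ B₁ᶜ, W a b)) := by
    intro a
    calc (∑ d, pXgY (a, d) * Real.logb 2 (pXgY (a, d)))
        = ∑ d, ((P a * (∑ b, if g b = d then W a b else 0)) * Real.logb 2 (P a)
            + (P a * (∑ b, if g b = d then W a b else 0))
              * Real.logb 2 (∑ b, if g b = d then W a b else 0)) := by
          refine Finset.sum_congr rfl fun d _ => ?_
          rw [hp a d]; exact mul_logb_mul' _ _
      _ = P a * Real.logb 2 (P a) * (∑ d, ∑ b, if g b = d then W a b else 0)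
          + P a * (∑ d, (∑ b, if g b = d then W a b else 0)
              * Real.logb 2 (∑ b, if g b = d then W a b else 0)) := by
          rw [Finset.sum_add_distrib, Finset.mul_sum, Finset.mul_sum]
          congr 1 <;> (refine Finset.sum_congr rfl fun d _ => ?_; ring)
      _ = _ := by rw [hV1 a, hWre a]; ring
  have entJ : ent pXgY = ent P
      - ∑ a, P a * (∑ b ∈ B₁, W a b * Real.logb 2 (W a b)
          + (∑ b ∈ B₁ᶜ, W a b) * Real.logb 2 (∑ b ∈ B₁ᶜ, W a b)) := by
    unfold ent
    rw [Fintype.sum_prod_type]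
    rw [Finset.sum_congr rfl fun a _ => hrow a]
    rw [Finset.sum_add_distrib]
    ring
  -- clean formula for IXgY
  have hIXgY : IXgY = -(∑ b ∈ B₁, q b * Real.logb 2 (q b))
      - (∑ b ∈ B₁ᶜ, q b) * Real.logb 2 (∑ b ∈ B₁ᶜ, q b)
      + ∑ a, P a * (∑ b ∈ B₁, W a b * Real.logb 2 (W a b)
          + (∑ b ∈ B₁ᶜ, W a b) * Real.logb 2 (∑ b ∈ B₁ᶜ, W a b)) := by
    show ent P + ent (fun d => ∑ a, pXgY (a, d)) - ent pXgY = _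
    rw [entM, entJ]; ring
  have e2 : ∀ a, (∑ b, W a b * Real.logb 2 (W a b))
      = ∑ b ∈ B₁, W a b * Real.logb 2 (W a b) + ∑ b ∈ B₁ᶜ, W a b * Real.logb 2 (W a b) :=
    fun a => (Finset.sum_add_sum_compl B₁ _).symm
  have e1 : (∑ b, q b * Real.logb 2 (q b))
      = ∑ b ∈ B₁, q b * Real.logb 2 (q b) + ∑ b ∈ B₁ᶜ, q b * Real.logb 2 (q b) :=
    (Finset.sum_add_sum_compl B₁ _).symm
  have c1 : (∑ a, P a * (∑ b ∈ B₁ᶜ, W a b) * Real.logb 2 (∑ b ∈ B₁ᶜ, q b))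
      = (∑ b ∈ B₁ᶜ, q b) * Real.logb 2 (∑ b ∈ B₁ᶜ, q b) := by
    rw [← hPsa, Finset.sum_mul]
  have c2 : (∑ b ∈ B₁ᶜ, q b * Real.logb 2 (q b))
      = ∑ a, ∑ b ∈ B₁ᶜ, P a * W a b * Real.logb 2 (q b) := by
    rw [Finset.sum_comm]
    refine Finset.sum_congr rfl fun b _ => ?_
    show q b * _ = _
    rw [show q b = ∑ a, P a * W a b from rfl, Finset.sum_mul]
  have hdiff : IXY - IXgY
      = ∑ a, (P a * (∑ b ∈ B₁ᶜ, W a b * Real.logb 2 (W a b))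
          + P a * (∑ b ∈ B₁ᶜ, W a b) * Real.logb 2 (∑ b ∈ B₁ᶜ, q b)
          - P a * (∑ b ∈ B₁ᶜ, W a b) * Real.logb 2 (∑ b ∈ B₁ᶜ, W a b)
          - ∑ b ∈ B₁ᶜ, P a * W a b * Real.logb 2 (q b)) := by
    have hIXY : IXY = (-∑ b, q b * Real.logb 2 (q b))
        + ∑ a, P a * ∑ b, W a b * Real.logb 2 (W a b) := rfl
    rw [hIXY, hIXgY, e1]
    simp only [e2, mul_add, mul_sub, Finset.sum_add_distrib, Finset.sum_sub_distrib]
    rw [c1, c2]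
    have assoc1 : (∑ a, P a * ((∑ b ∈ B₁ᶜ, W a b) * Real.logb 2 (∑ b ∈ B₁ᶜ, W a b)))
        = ∑ a, P a * (∑ b ∈ B₁ᶜ, W a b) * Real.logb 2 (∑ b ∈ B₁ᶜ, W a b) := by
      refine Finset.sum_congr rfl fun a _ => ?_; ring
    rw [assoc1]
    ring
  constructor
  · -- data processing inequality
    rcases B₁ᶜ.eq_empty_or_nonempty with he|⟨b₀, hb₀⟩
    · have h0 : IXY - IXgY = 0 := by rw [hdiff]; simp [he]
      linarith
    · have hqsp : 0 < ∑ b ∈ B₁ᶜ, q b := Finset.sum_pos (fun b _ => hqpos b) ⟨b₀, hb₀⟩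
      have hl2 : 0 < Real.log 2 := Real.log_pos (by norm_num)
      -- pointwise log-sum inequality
      have hpt : ∀ a ∈ (univ : Finset α), ∀ b ∈ B₁ᶜ,
          (∑ b' ∈ B₁ᶜ, q b') * (P a * W a b) - P a * (∑ b' ∈ B₁ᶜ, W a b') * q b
          ≤ ((∑ b' ∈ B₁ᶜ, q b') * (P a * W a b)
              * (Real.logb 2 (W a b) + Real.logb 2 (∑ b' ∈ B₁ᶜ, q b')
                - Real.logb 2 (∑ b' ∈ B₁ᶜ, W a b') - Real.logb 2 (q b))) * Real.log 2 := by
        intro a _ b hb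
        by_cases hx : P a * W a b = 0
        · rw [hx]
          have hv : 0 ≤ P a * (∑ b' ∈ B₁ᶜ, W a b') * q b :=
            mul_nonneg (mul_nonneg (hP0 a) (hs0 a)) (hq0 b)
          simp only [mul_zero, zero_mul, zero_sub]
          linarith
        · obtain ⟨hPa', hWab'⟩ := mul_ne_zero_iff.1 hx
          have hPa : 0 < P a := lt_of_le_of_ne (hP0 a) (Ne.symm hPa')
          have hWab : 0 < W a b := lt_of_le_of_ne (hW0 a b) (Ne.symm hWab')
          have hsa : 0 < ∑ b' ∈ B₁ᶜ, W a b' :=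
            lt_of_lt_of_le hWab (Finset.single_le_sum (fun b' _ => hW0 a b') hb)
          have hu : 0 ≤ (∑ b' ∈ B₁ᶜ, q b') * (P a * W a b) :=
            mul_nonneg hqsp.le (mul_nonneg (hP0 a) (hW0 a b))
          have hv : 0 ≤ P a * (∑ b' ∈ B₁ᶜ, W a b') * q b :=
            mul_nonneg (mul_nonneg (hP0 a) (hs0 a)) (hq0 b)
          have hvne : P a * (∑ b' ∈ B₁ᶜ, W a b') * q b ≠ 0 :=
            mul_ne_zero (mul_ne_zero hPa.ne' hsa.ne') (hqpos b).ne'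
          have key := core_ineq_b ((∑ b' ∈ B₁ᶜ, q b') * (P a * W a b))
            (P a * (∑ b' ∈ B₁ᶜ, W a b') * q b) hu hv (fun _ => hvne)
          have eu : Real.logb 2 ((∑ b' ∈ B₁ᶜ, q b') * (P a * W a b))
              = Real.logb 2 (∑ b' ∈ B₁ᶜ, q b') + (Real.logb 2 (P a) + Real.logb 2 (W a b)) := by
            rw [Real.logb_mul hqsp.ne' hx, Real.logb_mul hPa' hWab']
          have ev : Real.logb 2 (P a * (∑ b' ∈ B₁ᶜ, W a b') * q b)
              = Real.logb 2 (P a) + Real.logb 2 (∑ b' ∈ B₁ᶜ, W a b') + Real.logb 2 (q b) := by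
            rw [Real.logb_mul (mul_ne_zero hPa.ne' hsa.ne') (hqpos b).ne',
              Real.logb_mul hPa.ne' hsa.ne']
          calc (∑ b' ∈ B₁ᶜ, q b') * (P a * W a b) - P a * (∑ b' ∈ B₁ᶜ, W a b') * q b
              ≤ ((∑ b' ∈ B₁ᶜ, q b') * (P a * W a b)
                  * Real.logb 2 ((∑ b' ∈ B₁ᶜ, q b') * (P a * W a b))
                - (∑ b' ∈ B₁ᶜ, q b') * (P a * W a b)
                  * Real.logb 2 (P a * (∑ b' ∈ B₁ᶜ, W a b') * q b)) * Real.log 2 := key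
            _ = _ := by rw [eu, ev]; ring
      -- sum of left-hand sides is zero
      have hzero : (∑ a, ∑ b ∈ B₁ᶜ,
          ((∑ b' ∈ B₁ᶜ, q b') * (P a * W a b) - P a * (∑ b' ∈ B₁ᶜ, W a b') * q b)) = 0 := by
        refine Finset.sum_eq_zero fun a _ => ?_
        rw [Finset.sum_sub_distrib, ← Finset.mul_sum, ← Finset.mul_sum, ← Finset.mul_sum]
        ring
      -- sum of right-hand sides equals qs * (IXY - IXgY) * log 2
      have hT : (∑ a, ∑ b ∈ B₁ᶜ,
          ((∑ b' ∈ B₁ᶜ, q b') * (P a * W a b)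
            * (Real.logb 2 (W a b) + Real.logb 2 (∑ b' ∈ B₁ᶜ, q b')
              - Real.logb 2 (∑ b' ∈ B₁ᶜ, W a b') - Real.logb 2 (q b))) * Real.log 2)
          = ((∑ b' ∈ B₁ᶜ, q b') * (IXY - IXgY)) * Real.log 2 := by
        rw [hdiff, Finset.mul_sum, Finset.sum_mul]
        refine Finset.sum_congr rfl fun a _ => ?_
        rw [← Finset.sum_mul]
        congr 1
        rw [Finset.sum_congr rfl (fun b _ => show
          (∑ b' ∈ B₁ᶜ, q b') * (P a * W a b)
              * (Real.logb 2 (W a b) + Real.logb 2 (∑ b' ∈ B₁ᶜ, q b')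
                - Real.logb 2 (∑ b' ∈ B₁ᶜ, W a b') - Real.logb 2 (q b))
            = (∑ b' ∈ B₁ᶜ, q b') * (P a * (W a b * Real.logb 2 (W a b)))
              + (P a * W a b) * ((∑ b' ∈ B₁ᶜ, q b')
                  * (Real.logb 2 (∑ b' ∈ B₁ᶜ, q b') - Real.logb 2 (∑ b' ∈ B₁ᶜ, W a b')))
              - (∑ b' ∈ B₁ᶜ, q b') * (P a * W a b * Real.logb 2 (q b)) from by ring)]
        simp only [Finset.sum_sub_distrib, Finset.sum_add_distrib, ← Finset.mul_sum,
          ← Finset.sum_mul]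
        ring
      have hfinal : (0:ℝ) ≤ ((∑ b' ∈ B₁ᶜ, q b') * (IXY - IXgY)) * Real.log 2 := by
        rw [← hT, ← hzero]
        exact Finset.sum_le_sum fun a ha => Finset.sum_le_sum fun b hb => hpt a ha b hb
      by_contra hc
      push_neg at hc
      have h1 : (∑ b' ∈ B₁ᶜ, q b') * (IXY - IXgY) < 0 :=
        mul_neg_of_pos_of_neg hqsp (by linarith)
      have h2 : ((∑ b' ∈ B₁ᶜ, q b') * (IXY - IXgY)) * Real.log 2 < 0 :=
        mul_neg_of_neg_of_pos h1 hl2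
      linarith
  · -- equality under independence
    intro hI
    have hsaI : ∀ a, (∑ b ∈ B₁ᶜ, W a b) = 1 - PB₁ := by
      intro a
      have h2 := Finset.sum_add_sum_compl B₁ (W a)
      rw [hW1 a, hI a] at h2
      linarith
    have hqsI : (∑ b ∈ B₁ᶜ, q b) = 1 - PB₁ := by
      have h2 := Finset.sum_add_sum_compl B₁ q
      rw [hq1, ← hPBq] at h2
      linarith
    have pT : ∀ a, pXS (a, true) = P a * PB₁ := by
      intro a
      show (P a * if (true : Bool) = true then ∑ b ∈ B₁, W a b else ∑ b ∈ B₁ᶜ, W a b) = _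
      rw [if_pos rfl, hI a]
    have pF : ∀ a, pXS (a, false) = P a * (1 - PB₁) := by
      intro a
      show (P a * if (false : Bool) = true then ∑ b ∈ B₁, W a b else ∑ b ∈ B₁ᶜ, W a b) = _
      rw [if_neg (by simp), hsaI a]
    have margT : (∑ a, pXS (a, true)) = PB₁ := by
      simp only [pT]; rw [← Finset.sum_mul, hP1, one_mul]
    have margF : (∑ a, pXS (a, false)) = 1 - PB₁ := by
      simp only [pF]; rw [← Finset.sum_mul, hP1, one_mul]
    have entMS : ent (fun st => ∑ a, pXS (a, st))
        = -(PB₁ * Real.logb 2 PB₁ + (1-PB₁) * Real.logb 2 (1-PB₁)) := by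
      unfold ent
      rw [Fintype.sum_bool]
      simp only [margT, margF]
    have rowS : ∀ a, (∑ st : Bool, pXS (a, st) * Real.logb 2 (pXS (a, st)))
        = P a * Real.logb 2 (P a)
          + (P a * (PB₁ * Real.logb 2 PB₁) + P a * ((1-PB₁) * Real.logb 2 (1-PB₁))) := by
      intro a
      rw [Fintype.sum_bool, pT a, pF a, mul_logb_mul' (P a) PB₁, mul_logb_mul' (P a) (1-PB₁)]
      ring
    have entJS : ent pXS = ent P
        - (PB₁ * Real.logb 2 PB₁ + (1-PB₁) * Real.logb 2 (1-PB₁)) := by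
      unfold ent
      rw [Fintype.sum_prod_type]
      rw [Finset.sum_congr rfl fun a _ => rowS a]
      rw [Finset.sum_add_distrib, Finset.sum_add_distrib, ← Finset.sum_mul, ← Finset.sum_mul,
        hP1, one_mul, one_mul]
      ring
    have hIXS : IXS = 0 := by
      show ent P + ent (fun st => ∑ a, pXS (a, st)) - ent pXS = 0
      rw [entMS, entJS]; ring
    have hIXgY2 : IXgY = -(∑ b ∈ B₁, q b * Real.logb 2 (q b))
        + ∑ a, P a * ∑ b ∈ B₁, W a b * Real.logb 2 (W a b) := by
      rw [hIXgY]
      simp only [hsaI, hqsI]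
      rw [Finset.sum_congr rfl fun a _ => mul_add (P a)
          (∑ b ∈ B₁, W a b * Real.logb 2 (W a b)) ((1-PB₁) * Real.logb 2 (1-PB₁)),
        Finset.sum_add_distrib, ← Finset.sum_mul, hP1, one_mul]
      ring
    rcases B₁.eq_empty_or_nonempty with hB|⟨b₁, hb₁⟩
    · have hPB0 : PB₁ = 0 := by rw [hPBq, hB]; simp
      have hI₁0 : I₁ = 0 := by
        show (-∑ b ∈ B₁, (q b / PB₁) * Real.logb 2 (q b / PB₁))
          + (∑ a, P a * ∑ b ∈ B₁, (W a b / PB₁) * Real.logb 2 (W a b / PB₁)) = 0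
        rw [hB]; simp
      rw [hIXgY2, hIXS, hI₁0, hB]
      simp
    · have hPBpos : 0 < PB₁ := by
        rw [hPBq]; exact Finset.sum_pos (fun b _ => hqpos b) ⟨b₁, hb₁⟩
      have perb : ∀ x : ℝ, PB₁ * ((x / PB₁) * Real.logb 2 (x / PB₁))
          = x * Real.logb 2 x - x * Real.logb 2 PB₁ := by
        intro x
        rw [show PB₁ * ((x / PB₁) * Real.logb 2 (x / PB₁))
            = ((x / PB₁) * PB₁) * Real.logb 2 (x / PB₁) from by ring,
          div_mul_cancel₀ x hPBpos.ne', mul_logb_div' x PB₁ hPBpos.ne']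
      have pera : ∀ a, PB₁ * (P a * ∑ b ∈ B₁, (W a b / PB₁) * Real.logb 2 (W a b / PB₁))
          = P a * (∑ b ∈ B₁, W a b * Real.logb 2 (W a b)) - P a * (PB₁ * Real.logb 2 PB₁) := by
        intro a
        rw [show PB₁ * (P a * ∑ b ∈ B₁, (W a b / PB₁) * Real.logb 2 (W a b / PB₁))
            = P a * ∑ b ∈ B₁, PB₁ * ((W a b / PB₁) * Real.logb 2 (W a b / PB₁)) from by
              rw [← Finset.mul_sum]; ring,
          Finset.sum_congr rfl fun b _ => perb (W a b), Finset.sum_sub_distrib,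
          ← Finset.sum_mul, hI a]
        ring
      have hPI : PB₁ * I₁ = -(∑ b ∈ B₁, q b * Real.logb 2 (q b))
          + ∑ a, P a * ∑ b ∈ B₁, W a b * Real.logb 2 (W a b) := by
        show PB₁ * ((-∑ b ∈ B₁, (q b / PB₁) * Real.logb 2 (q b / PB₁))
          + ∑ a, P a * ∑ b ∈ B₁, (W a b / PB₁) * Real.logb 2 (W a b / PB₁)) = _
        rw [mul_add, mul_neg, Finset.mul_sum, Finset.mul_sum,
          Finset.sum_congr rfl fun b _ => perb (q b),
          Finset.sum_congr rfl fun a _ => pera a,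
          Finset.sum_sub_distrib, ← Finset.sum_mul (f := q), ← hPBq,
          Finset.sum_sub_distrib, ← Finset.sum_mul (f := P), hP1, one_mul]
        ring
      rw [hIXgY2, hIXS, hPI]
      ring
end
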